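/- arXiv:1906.05666 — 7 statements merged into one kernel-verified Lean document; each statement's English description precedes it below -/
import Mathlib

section
/- Suppose (ε_k) is a sequence of positive reals with ε_k → 0 and, for each k, (μ_k, v_k) is an eigenpair of the ε_k-perturbed problem with ‖v_k‖_X = 1, a(v_k, u_0) ≥ 0, and μ_k → λ_0. Then v_k → u_0 strongly in X. -/
/-!
Write `v k = c k • u0 + ξ k` with `a (ξ k) u0 = 0`. Testing the perturbed equation against `ξ k`
and using the spectral gap gives `ε k * ⟪v k, ξ k⟫ ≤ (μ k - lam2) * b (ξ k) (ξ k)`, so that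
eventually `⟪v k, ξ k⟫ ≤ 0`, i.e. `c k * ⟪v k, u0⟫ ≥ 1`, and `b (ξ k) (ξ k) = O(ε k) → 0`.
A bounded sequence along which `b` tends to zero is weakly null: along any ultrafilter it has a
weak limit `w` (Banach–Alaoglu), and weak lower semicontinuity of `b` gives `b w w ≤ 0`.
Hence `⟪v k, u0⟫ - c k = ⟪ξ k, u0⟫ → 0`, which together with `c k ≥ 0` and `c k * ⟪v k, u0⟫ ≥ 1`
forces `⟪v k, u0⟫ → 1`, that is `‖v k - u0‖ ^ 2 = 2 - 2 * ⟪v k, u0⟫ → 0`.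
-/

open scoped RealInnerProductSpace
open Filter Topology

theorem exists_tendsto_inner_of_norm_le {𝕜 ι E : Type*} [RCLike 𝕜] [NormedAddCommGroup E]
    [InnerProductSpace 𝕜 E] [CompleteSpace E] {x : ι → E} {C : ℝ} (hx : ∀ i, ‖x i‖ ≤ C)
    (U : Ultrafilter ι) :
    ∃ w : E, ∀ φ : E, Tendsto (fun i => inner 𝕜 (x i) φ) U (𝓝 (inner 𝕜 w φ)) := by
  let f : ι → WeakDual 𝕜 E := fun i => StrongDual.toWeakDual (InnerProductSpace.toDual 𝕜 E (x i))
  have hf : ∀ i, f i ∈ WeakDual.toStrongDual ⁻¹' Metric.closedBall 0 C := fun i => by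
    simpa [f] using hx i
  obtain ⟨g, -, hg⟩ := (WeakDual.isCompact_closedBall 0 C).ultrafilter_le_nhds (U.map f)
    (by rw [Ultrafilter.coe_map, le_principal_iff]; exact mem_map.2 (univ_mem' hf))
  refine ⟨(InnerProductSpace.toDual 𝕜 E).symm (WeakDual.toStrongDual g), fun φ => ?_⟩
  rw [InnerProductSpace.toDual_symm_apply]
  exact (tendsto_iff_forall_eval_tendsto_topDualPairing.mp hg) φ

theorem tendsto_of_mul_ge_one_of_tendsto_sub {ι : Type*} {l : Filter ι} {t c : ι → ℝ}
    (ht : ∀ i, t i ≤ 1) (hc : ∀ i, 0 ≤ c i) (hct : ∀ᶠ i in l, 1 ≤ c i * t i)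
    (hlim : Tendsto (fun i => t i - c i) l (𝓝 0)) : Tendsto t l (𝓝 1) := by
  have hlower : Tendsto (fun i => 1 + (t i - c i)) l (𝓝 1) := by
    simpa using hlim.const_add 1
  refine tendsto_of_tendsto_of_tendsto_of_le_of_le' hlower tendsto_const_nhds ?_
    (Eventually.of_forall ht)
  filter_upwards [hct] with i hi
  nlinarith [ht i, hc i]

section

variable {X : Type*} [NormedAddCommGroup X] [InnerProductSpace ℝ X]

theorem LinearMap.apply_self_nonneg_of_pos (b : X →ₗ[ℝ] X →ₗ[ℝ] ℝ)
    (hb_posdef : ∀ u : X, u ≠ 0 → 0 < b u u) (u : X) : 0 ≤ b u u := by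
  rcases eq_or_ne u 0 with rfl | hu
  · simp
  · exact (hb_posdef u hu).le

theorem tendsto_inner_zero_of_tendsto_apply_self_zero [CompleteSpace X] {ι : Type*}
    {l : Filter ι} (b : X →ₗ[ℝ] X →ₗ[ℝ] ℝ) (hb_cont : Continuous fun p : X × X => b p.1 p.2)
    (hb_posdef : ∀ u : X, u ≠ 0 → 0 < b u u) {x : ι → X} {C : ℝ} (hx : ∀ i, ‖x i‖ ≤ C)
    (hbx : Tendsto (fun i => b (x i) (x i)) l (𝓝 0)) (φ : X) :
    Tendsto (fun i => ⟪x i, φ⟫) l (𝓝 0) := by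
  rw [tendsto_iff_ultrafilter]
  intro U hU
  obtain ⟨w, hw⟩ := exists_tendsto_inner_of_norm_le (𝕜 := ℝ) hx U
  suffices w = 0 by simpa [this] using hw φ
  have hweak : ∀ G : X →L[ℝ] ℝ, Tendsto (fun i => G (x i)) U (𝓝 (G w)) := fun G => by
    simpa only [real_inner_comm ((InnerProductSpace.toDual ℝ X).symm G),
      InnerProductSpace.toDual_symm_apply] using hw ((InnerProductSpace.toDual ℝ X).symm G)
  have hleft : Tendsto (fun i => b (x i) w) U (𝓝 (b w w)) :=
    hweak ⟨b.flip w, hb_cont.comp (continuous_id.prodMk continuous_const)⟩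
  have hright : Tendsto (fun i => b w (x i)) U (𝓝 (b w w)) :=
    hweak ⟨b w, hb_cont.comp (continuous_const.prodMk continuous_id)⟩
  have hlim : Tendsto (fun i => b (x i - w) (x i - w)) U (𝓝 (0 - b w w - b w w + b w w)) := by
    simp only [map_sub, LinearMap.sub_apply]
    convert (((hbx.mono_left hU).sub hleft).sub hright).add_const (b w w) using 2
    ring
  have hww : b w w ≤ 0 := by
    linarith [ge_of_tendsto' hlim fun i => b.apply_self_nonneg_of_pos hb_posdef (x i - w)]
  by_contra hw0
  exact (hb_posdef w hw0).not_ge hww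

theorem tendsto_of_tendsto_inner_one {ι : Type*} {l : Filter ι} {v : ι → X} {u : X}
    (hv : ∀ i, ‖v i‖ = 1) (hu : ‖u‖ = 1) (h : Tendsto (fun i => ⟪v i, u⟫) l (𝓝 1)) :
    Tendsto v l (𝓝 u) := by
  rw [tendsto_iff_norm_sub_tendsto_zero]
  have hnorm : ∀ i, ‖v i - u‖ = √(2 - 2 * ⟪v i, u⟫) := fun i => by
    rw [← Real.sqrt_sq (norm_nonneg _), norm_sub_sq_real, hv i, hu]
    ring_nf
  simp only [hnorm]
  simpa using ((h.const_mul 2).const_sub 2).sqrt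

theorem norm_sub_smul_le (F : X →L[ℝ] ℝ) (u x : X) :
    ‖x - F x • u‖ ≤ (1 + ‖F‖ * ‖u‖) * ‖x‖ :=
  calc ‖x - F x • u‖ ≤ ‖x‖ + ‖F x‖ * ‖u‖ := (norm_sub_le _ _).trans_eq (by rw [norm_smul])
    _ ≤ ‖x‖ + ‖F‖ * ‖x‖ * ‖u‖ := by gcongr; exact F.le_opNorm x
    _ = (1 + ‖F‖ * ‖u‖) * ‖x‖ := by ring

theorem perturbed_eq_of_apply_eq_zero (a b : X →ₗ[ℝ] X →ₗ[ℝ] ℝ)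
    (ha_symm : ∀ u v : X, a u v = a v u) {lam0 : ℝ} (hlam0 : lam0 ≠ 0) {u0 : X}
    (h_eig0 : ∀ φ : X, a u0 φ = lam0 * b u0 φ) {ε μ c : ℝ} {v ξ : X}
    (h_pair : ∀ φ : X, ε * ⟪v, φ⟫ + a v φ = μ * b v φ) (hv : v = c • u0 + ξ)
    (hξ : a ξ u0 = 0) :
    ε * ⟪v, ξ⟫ + a ξ ξ = μ * b ξ ξ := by
  have ha : a u0 ξ = 0 := (ha_symm u0 ξ).trans hξ
  have hb : b u0 ξ = 0 := by
    have := h_eig0 ξ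
    rw [ha] at this
    exact (mul_eq_zero.mp this.symm).resolve_left hlam0
  simpa [hv, ha, hb] using h_pair ξ

theorem eventually_inner_nonpos_and_tendsto_zero_of_perturbed_eq {ι : Type*} {l : Filter ι}
    (a b : X →ₗ[ℝ] X →ₗ[ℝ] ℝ) {lam0 lam2 : ℝ} (hlam2 : lam0 < lam2) {ε μ : ι → ℝ}
    (hε_pos : ∀ i, 0 < ε i) (hε_lim : Tendsto ε l (𝓝 0)) (hμ_lim : Tendsto μ l (𝓝 lam0))
    {v ξ : ι → X} {C : ℝ} (hv : ∀ i, ‖v i‖ = 1) (hξ : ∀ i, ‖ξ i‖ ≤ C)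
    (hb : ∀ i, 0 ≤ b (ξ i) (ξ i)) (h_gap : ∀ i, lam2 * b (ξ i) (ξ i) ≤ a (ξ i) (ξ i))
    (h_eq : ∀ i, ε i * ⟪v i, ξ i⟫ + a (ξ i) (ξ i) = μ i * b (ξ i) (ξ i)) :
    (∀ᶠ i in l, ⟪v i, ξ i⟫ ≤ 0) ∧ Tendsto (fun i => b (ξ i) (ξ i)) l (𝓝 0) := by
  obtain ⟨δ, hδ, hμ⟩ : ∃ δ > 0, ∀ᶠ i in l, μ i ≤ lam2 - δ :=
    ⟨(lam2 - lam0) / 2, by linarith, hμ_lim.eventually (ge_mem_nhds (by linarith))⟩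
  -- with `B = b (ξ i) (ξ i)`:
  -- `ε i * ⟪v i, ξ i⟫ = μ i * B - a (ξ i) (ξ i) ≤ (μ i - lam2) * B ≤ -δ * B`
  constructor
  · filter_upwards [hμ] with i hi
    nlinarith [h_eq i, h_gap i, hb i, hε_pos i]
  · have hbound : ∀ᶠ i in l, b (ξ i) (ξ i) ≤ ε i * (C / δ) := by
      filter_upwards [hμ] with i hi
      have hinner : -⟪v i, ξ i⟫ ≤ C := by
        have := abs_real_inner_le_norm (v i) (ξ i)
        rw [hv i, one_mul] at this
        linarith [neg_le_abs ⟪v i, ξ i⟫, hξ i]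
      rw [← mul_div_assoc, le_div_iff₀ hδ]
      nlinarith [h_eq i, h_gap i, hb i, hε_pos i]
    refine squeeze_zero' (Eventually.of_forall hb) hbound ?_
    simpa using hε_lim.mul_const (C / δ)

end

theorem perturbed_eigenfunctions_converge_general
    {X : Type*} [NormedAddCommGroup X] [InnerProductSpace ℝ X] [CompleteSpace X]
    (a b : X →ₗ[ℝ] X →ₗ[ℝ] ℝ)
    (ha_symm : ∀ u v : X, a u v = a v u)
    (ha_cont : Continuous fun p : X × X => a p.1 p.2)
    (hb_cont : Continuous fun p : X × X => b p.1 p.2)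
    (hb_posdef : ∀ u : X, u ≠ 0 → 0 < b u u)
    (lam0 : ℝ) (hlam0 : 0 < lam0) (u0 : X) (hu0 : ‖u0‖ = 1)
    (h_eig0 : ∀ φ : X, a u0 φ = lam0 * b u0 φ)
    (lam2 : ℝ) (hlam2 : lam0 < lam2)
    (h_gap : ∀ ξ : X, a ξ u0 = 0 → lam2 * b ξ ξ ≤ a ξ ξ)
    (ε : ℕ → ℝ) (hε_pos : ∀ k, 0 < ε k) (hε_lim : Tendsto ε atTop (nhds 0))
    (μ : ℕ → ℝ) (v : ℕ → X)
    (h_pair : ∀ k, ∀ φ : X, ε k * ⟪v k, φ⟫ + a (v k) φ = μ k * b (v k) φ)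
    (hv_norm : ∀ k, ‖v k‖ = 1)
    (hv_sign : ∀ k, 0 ≤ a (v k) u0)
    (hμ_lim : Tendsto μ atTop (nhds lam0)) :
    Tendsto v atTop (nhds u0) := by
  have ha00 : 0 < a u0 u0 :=
    h_eig0 u0 ▸ mul_pos hlam0 (hb_posdef u0 (by rintro rfl; simp at hu0))
  let F : X →L[ℝ] ℝ :=
    (a u0 u0)⁻¹ • ⟨a.flip u0, ha_cont.comp (continuous_id.prodMk continuous_const)⟩
  set ξ : ℕ → X := fun k => v k - F (v k) • u0
  have hF : ∀ x, F x = (a u0 u0)⁻¹ * a x u0 := fun _ => rfl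
  have hξ_orth : ∀ k, a (ξ k) u0 = 0 := fun k => by
    simp only [ξ, map_sub, map_smul, LinearMap.sub_apply, LinearMap.smul_apply, smul_eq_mul, hF]
    field_simp
    ring
  have hξ_norm : ∀ k, ‖ξ k‖ ≤ 1 + ‖F‖ * ‖u0‖ := fun k => by
    simpa [hv_norm k] using norm_sub_smul_le F u0 (v k)
  obtain ⟨hsign, hbξ⟩ := eventually_inner_nonpos_and_tendsto_zero_of_perturbed_eq a b hlam2
    hε_pos hε_lim hμ_lim hv_norm hξ_norm (fun k => b.apply_self_nonneg_of_pos hb_posdef _)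
    (fun k => h_gap _ (hξ_orth k)) fun k => perturbed_eq_of_apply_eq_zero a b ha_symm
      hlam0.ne' h_eig0 (h_pair k) (add_sub_cancel _ _).symm (hξ_orth k)
  have hξu0 := tendsto_inner_zero_of_tendsto_apply_self_zero b hb_cont hb_posdef hξ_norm hbξ u0
  refine tendsto_of_tendsto_inner_one hv_norm hu0
    (tendsto_of_mul_ge_one_of_tendsto_sub (c := fun k => F (v k)) (fun k => ?_)
      (fun k => mul_nonneg (inv_nonneg.mpr ha00.le) (hv_sign k)) ?_ ?_)
  · simpa [hv_norm k, hu0] using real_inner_le_norm (v k) u0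
  · filter_upwards [hsign] with k hk
    simp only [ξ, inner_sub_right, real_inner_smul_right, real_inner_self_eq_norm_sq,
      hv_norm k] at hk
    linarith
  · simpa [ξ, inner_sub_left, real_inner_smul_left, hu0] using hξu0

/-- Abstract form of Lemma 2.2: if `(μ k, v k)` are normalized, sign-normalized eigenpairs of
the `ε k`-perturbed problems with `ε k → 0` and `μ k → λ₀`, then `v k → u₀` strongly. -/
theorem perturbed_eigenfunctions_converge
    {X : Type*} [NormedAddCommGroup X] [InnerProductSpace ℝ X] [CompleteSpace X]
    (a b : X →ₗ[ℝ] X →ₗ[ℝ] ℝ)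
    (ha_symm : ∀ u v : X, a u v = a v u)
    (hb_symm : ∀ u v : X, b u v = b v u)
    (ha_cont : Continuous fun p : X × X => a p.1 p.2)
    (hb_cont : Continuous fun p : X × X => b p.1 p.2)
    (ha_nonneg : ∀ u : X, 0 ≤ a u u)
    (hb_posdef : ∀ u : X, u ≠ 0 → 0 < b u u)
    (hb_compact : ∀ (v : ℕ → X) (w : X),
        (∀ φ : X, Filter.Tendsto (fun k => ⟪v k, φ⟫) Filter.atTop (nhds ⟪w, φ⟫)) →
        Filter.Tendsto (fun k => b (v k - w) (v k - w)) Filter.atTop (nhds 0))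
    (lam0 : ℝ) (hlam0 : 0 < lam0) (u0 : X) (hu0 : ‖u0‖ = 1)
    (h_eig0 : ∀ φ : X, a u0 φ = lam0 * b u0 φ)
    (h_rayleigh : ∀ u : X, lam0 * b u u ≤ a u u)
    (lam2 : ℝ) (hlam2 : lam0 < lam2)
    (h_gap : ∀ ξ : X, a ξ u0 = 0 → lam2 * b ξ ξ ≤ a ξ ξ)
    (ε : ℕ → ℝ) (hε_pos : ∀ k, 0 < ε k) (hε_lim : Tendsto ε atTop (nhds 0))
    (μ : ℕ → ℝ) (v : ℕ → X)
    (hv_ne : ∀ k, v k ≠ 0)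
    (h_pair : ∀ k, ∀ φ : X, ε k * ⟪v k, φ⟫ + a (v k) φ = μ k * b (v k) φ)
    (hv_norm : ∀ k, ‖v k‖ = 1)
    (hv_sign : ∀ k, 0 ≤ a (v k) u0)
    (hμ_lim : Tendsto μ atTop (nhds lam0)) :
    Tendsto v atTop (nhds u0) :=
  perturbed_eigenfunctions_converge_general a b ha_symm ha_cont hb_cont hb_posdef lam0 hlam0 u0 hu0
    h_eig0 lam2 hlam2 h_gap ε hε_pos hε_lim μ v h_pair hv_norm hv_sign hμ_lim
end

section
/- Let ε > 0 and let (λ, u) be an eigenpair of the ε-perturbed problem (u ≠ 0). Then there exists no v ∈ X such that ε⟨v, φ⟩_X + a(v, φ) − λ b(v, φ) = ⟨u, φ⟩_X for all φ ∈ X. -/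
/-!
The form `ε⟪·,·⟫ + a - λ b` is symmetric, so the Riesz functional of anything in its range is
orthogonal to its null space; `u` lies in that null space, so `⟪u, u⟫ = 0`.
-/

open scoped RealInnerProductSpace

theorem eq_zero_of_forall_apply_eq_zero_of_forall_apply_eq_inner
    {X : Type*} [NormedAddCommGroup X] [InnerProductSpace ℝ X]
    (B : X → X → ℝ) (hB : ∀ x y, B x y = B y x) {u v : X}
    (hu : ∀ φ, B u φ = 0) (hv : ∀ φ, B v φ = ⟪u, φ⟫) : u = 0 := by
  refine inner_self_eq_zero (𝕜 := ℝ) |>.mp ?_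
  calc ⟪u, u⟫ = B v u := (hv u).symm
    _ = B u v := hB v u
    _ = 0 := hu v

theorem eigenfunction_not_in_range_general
    {X : Type*} [NormedAddCommGroup X] [InnerProductSpace ℝ X]
    (a b : X →ₗ[ℝ] X →ₗ[ℝ] ℝ)
    (ha_symm : ∀ u v : X, a u v = a v u)
    (hb_symm : ∀ u v : X, b u v = b v u)
    (ε : ℝ) (lam : ℝ) (u : X) (hu : u ≠ 0)
    (h_pair : ∀ φ : X, ε * ⟪u, φ⟫ + a u φ = lam * b u φ) :
    ¬ ∃ v : X, ∀ φ : X, ε * ⟪v, φ⟫ + a v φ - lam * b v φ = ⟪u, φ⟫ := by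
  rintro ⟨v, hv⟩
  refine hu (eq_zero_of_forall_apply_eq_zero_of_forall_apply_eq_inner
    (fun x y => ε * ⟪x, y⟫ + a x y - lam * b x y) (fun x y => ?_) (fun φ => ?_) hv)
  · rw [real_inner_comm, ha_symm, hb_symm]
  · linarith [h_pair φ]

/-- The algebraic-simplicity step (2.15): the eigenfunction `u` of the ε-perturbed problem
is not in the range of the operator `L_ε(ε, ·)`. -/
theorem eigenfunction_not_in_range
    {X : Type*} [NormedAddCommGroup X] [InnerProductSpace ℝ X] [CompleteSpace X]
    (a b : X →ₗ[ℝ] X →ₗ[ℝ] ℝ)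
    (ha_symm : ∀ u v : X, a u v = a v u)
    (hb_symm : ∀ u v : X, b u v = b v u)
    (ha_cont : Continuous fun p : X × X => a p.1 p.2)
    (hb_cont : Continuous fun p : X × X => b p.1 p.2)
    (ha_nonneg : ∀ u : X, 0 ≤ a u u)
    (hb_posdef : ∀ u : X, u ≠ 0 → 0 < b u u)
    (hb_compact : ∀ (v : ℕ → X) (w : X),
        (∀ φ : X, Filter.Tendsto (fun k => ⟪v k, φ⟫) Filter.atTop (nhds ⟪w, φ⟫)) →
        Filter.Tendsto (fun k => b (v k - w) (v k - w)) Filter.atTop (nhds 0))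
    (lam0 : ℝ) (hlam0 : 0 < lam0) (u0 : X) (hu0 : ‖u0‖ = 1)
    (h_eig0 : ∀ φ : X, a u0 φ = lam0 * b u0 φ)
    (h_rayleigh : ∀ u : X, lam0 * b u u ≤ a u u)
    (lam2 : ℝ) (hlam2 : lam0 < lam2)
    (h_gap : ∀ ξ : X, a ξ u0 = 0 → lam2 * b ξ ξ ≤ a ξ ξ)
    (ε : ℝ) (hε : 0 < ε) (lam : ℝ) (u : X) (hu : u ≠ 0)
    (h_pair : ∀ φ : X, ε * ⟪u, φ⟫ + a u φ = lam * b u φ) :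
    ¬ ∃ v : X, ∀ φ : X, ε * ⟪v, φ⟫ + a v φ - lam * b v φ = ⟪u, φ⟫ :=
  eigenfunction_not_in_range_general a b ha_symm hb_symm ε lam u hu h_pair
end

section
/- There exist s > 0 and δ > 0 such that for every ε ∈ (0, s), any two eigenpairs (λ, u) and (μ, v) of the ε-perturbed problem with |λ − λ_0| < δ and |μ − λ_0| < δ satisfy λ = μ. -/
/-!
Let `Λ` bound the Rayleigh quotient of the form `A = ε⟪·,·⟫ + a` from below on the
`b`-orthogonal complement of `u₀`; for `ε ≥ 0` the spectral gap gives this with `Λ = λ⁽²⁾`.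
Two `b`-eigenvectors `u`, `v` of `A` with eigenvalues below `Λ` must then share their
eigenvalue: otherwise they are `b`- and `A`-orthogonal, so the combination
`w = b(v,u₀) u - b(u,u₀) v`, which is `b`-orthogonal to `u₀`, has Rayleigh quotient below `Λ`
and vanishes; pairing `w` with `v` gives `b(u,u₀) = 0`, and then `u` itself lies in the
complement with Rayleigh quotient below `Λ`, so `u = 0`. Hence `δ = λ⁽²⁾ - λ₀` works for
every `ε > 0`.
-/

open scoped RealInnerProductSpace

section GapEigenvalue

variable {V : Type*} [AddCommGroup V] [Module ℝ V] {A b : V →ₗ[ℝ] V →ₗ[ℝ] ℝ} {u₀ : V} {Λ : ℝ}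

theorem eq_zero_of_orthogonal_of_rayleigh_lt_gap (hb_pos : ∀ u, u ≠ 0 → 0 < b u u)
    (hgap : ∀ ξ, b ξ u₀ = 0 → Λ * b ξ ξ ≤ A ξ ξ) {w : V} (hw₀ : b w u₀ = 0) {κ : ℝ}
    (hκ : κ < Λ) (hw : A w w ≤ κ * b w w) : w = 0 := by
  by_contra hne
  nlinarith [hgap w hw₀, hb_pos w hne]

theorem eigenvalue_eq_of_lt_gap (hA_symm : ∀ x y, A x y = A y x)
    (hb_symm : ∀ x y, b x y = b y x)
    (hb_pos : ∀ u, u ≠ 0 → 0 < b u u) (hgap : ∀ ξ, b ξ u₀ = 0 → Λ * b ξ ξ ≤ A ξ ξ)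
    {lam μ : ℝ} {u v : V} (hu : u ≠ 0) (hv : v ≠ 0) (hequ : ∀ φ, A u φ = lam * b u φ)
    (heqv : ∀ φ, A v φ = μ * b v φ) (hlam : lam < Λ) (hμ : μ < Λ) : lam = μ := by
  by_contra hne
  have huv : b u v = 0 := by
    have h : (lam - μ) * b u v = 0 := by
      have := heqv u
      rw [hA_symm, hequ, hb_symm v u] at this
      linarith
    exact (mul_eq_zero.mp h).resolve_left (sub_ne_zero.mpr hne)
  have hvu : b v u = 0 := by rw [hb_symm, huv]
  set p := b v u₀
  set q := b u u₀
  have hA_ww :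
      A (p • u - q • v) (p • u - q • v) = p ^ 2 * (lam * b u u) + q ^ 2 * (μ * b v v) := by
    simp only [map_sub, map_smul, LinearMap.sub_apply, LinearMap.smul_apply, smul_eq_mul, hequ,
      heqv, huv, hvu]
    ring
  have hb_ww : b (p • u - q • v) (p • u - q • v) = p ^ 2 * b u u + q ^ 2 * b v v := by
    simp only [map_sub, map_smul, LinearMap.sub_apply, LinearMap.smul_apply, smul_eq_mul, huv, hvu]
    ring
  have hw : p • u - q • v = 0 := by
    refine eq_zero_of_orthogonal_of_rayleigh_lt_gap hb_pos hgap ?_ (max_lt hlam hμ) ?_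
    · simp only [map_sub, map_smul, LinearMap.sub_apply, LinearMap.smul_apply, smul_eq_mul, p, q]
      ring
    · rw [hA_ww, hb_ww]
      nlinarith [mul_le_mul_of_nonneg_right (le_max_left lam μ)
          (mul_nonneg (sq_nonneg p) (hb_pos u hu).le),
        mul_le_mul_of_nonneg_right (le_max_right lam μ)
          (mul_nonneg (sq_nonneg q) (hb_pos v hv).le)]
  have hq : q = 0 := by
    have h := congrArg (b · v) hw
    simp only [map_sub, map_smul, LinearMap.sub_apply, LinearMap.smul_apply, smul_eq_mul, huv,
      map_zero, LinearMap.zero_apply] at h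
    nlinarith [hb_pos v hv]
  exact hu (eq_zero_of_orthogonal_of_rayleigh_lt_gap hb_pos hgap hq hlam (hequ u).le)

end GapEigenvalue

section Perturbation

variable {X : Type*} [NormedAddCommGroup X] [InnerProductSpace ℝ X] {a b : X →ₗ[ℝ] X →ₗ[ℝ] ℝ}

theorem smul_innerₗ_add_symm (ha_symm : ∀ u v, a u v = a v u) (ε : ℝ) (x y : X) :
    (ε • innerₗ X + a) x y = (ε • innerₗ X + a) y x := by
  simp only [LinearMap.add_apply, LinearMap.smul_apply, innerₗ_apply_apply, real_inner_comm x y,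
    ha_symm x y]

theorem spectral_gap_smul_innerₗ_add (ha_symm : ∀ u v, a u v = a v u)
    (hb_symm : ∀ u v, b u v = b v u) {lam0 lam2 : ℝ} {u0 : X}
    (h_eig0 : ∀ φ, a u0 φ = lam0 * b u0 φ) (h_gap : ∀ ξ, a ξ u0 = 0 → lam2 * b ξ ξ ≤ a ξ ξ)
    {ε : ℝ} (hε : 0 ≤ ε) (ξ : X) (hξ : b ξ u0 = 0) :
    lam2 * b ξ ξ ≤ (ε • innerₗ X + a) ξ ξ := by
  have ha : a ξ u0 = 0 := by rw [ha_symm, h_eig0, hb_symm, hξ, mul_zero]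
  have hinner : 0 ≤ ε * ⟪ξ, ξ⟫ := mul_nonneg hε real_inner_self_nonneg
  simp only [LinearMap.add_apply, LinearMap.smul_apply, innerₗ_apply_apply, smul_eq_mul]
  linarith [h_gap ξ ha]

end Perturbation

theorem perturbed_eigenvalue_unique_near_general
    {X : Type*} [NormedAddCommGroup X] [InnerProductSpace ℝ X]
    (a b : X →ₗ[ℝ] X →ₗ[ℝ] ℝ)
    (ha_symm : ∀ u v : X, a u v = a v u)
    (hb_symm : ∀ u v : X, b u v = b v u)
    (hb_posdef : ∀ u : X, u ≠ 0 → 0 < b u u)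
    (lam0 : ℝ) (u0 : X)
    (h_eig0 : ∀ φ : X, a u0 φ = lam0 * b u0 φ)
    (lam2 : ℝ) (hlam2 : lam0 < lam2)
    (h_gap : ∀ ξ : X, a ξ u0 = 0 → lam2 * b ξ ξ ≤ a ξ ξ)
    : ∃ s : ℝ, 0 < s ∧ ∃ δ : ℝ, 0 < δ ∧ ∀ ε : ℝ, 0 < ε → ε < s →
      ∀ lam μ : ℝ, ∀ u v : X, u ≠ 0 → v ≠ 0 →
        (∀ φ : X, ε * ⟪u, φ⟫ + a u φ = lam * b u φ) →
        (∀ φ : X, ε * ⟪v, φ⟫ + a v φ = μ * b v φ) →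
        |lam - lam0| < δ → |μ - lam0| < δ → lam = μ := by
  refine ⟨1, one_pos, lam2 - lam0, sub_pos.mpr hlam2, ?_⟩
  intro ε hε _ lam μ u v hu hv hequ heqv hlam hμ
  exact eigenvalue_eq_of_lt_gap (smul_innerₗ_add_symm ha_symm ε) hb_symm hb_posdef
    (spectral_gap_smul_innerₗ_add ha_symm hb_symm h_eig0 h_gap hε.le) hu hv hequ heqv
    (by linarith [(abs_lt.mp hlam).2]) (by linarith [(abs_lt.mp hμ).2])

/-- The uniqueness step of Theorem 1.2: for all small `ε > 0`, the ε-perturbed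
problem has a unique eigenvalue near `λ₀`. -/
theorem perturbed_eigenvalue_unique_near
    {X : Type*} [NormedAddCommGroup X] [InnerProductSpace ℝ X] [CompleteSpace X]
    (a b : X →ₗ[ℝ] X →ₗ[ℝ] ℝ)
    (ha_symm : ∀ u v : X, a u v = a v u)
    (hb_symm : ∀ u v : X, b u v = b v u)
    (ha_cont : Continuous fun p : X × X => a p.1 p.2)
    (hb_cont : Continuous fun p : X × X => b p.1 p.2)
    (ha_nonneg : ∀ u : X, 0 ≤ a u u)
    (hb_posdef : ∀ u : X, u ≠ 0 → 0 < b u u)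
    (hb_compact : ∀ (v : ℕ → X) (w : X),
        (∀ φ : X, Filter.Tendsto (fun k => ⟪v k, φ⟫) Filter.atTop (nhds ⟪w, φ⟫)) →
        Filter.Tendsto (fun k => b (v k - w) (v k - w)) Filter.atTop (nhds 0))
    (lam0 : ℝ) (hlam0 : 0 < lam0) (u0 : X) (hu0 : ‖u0‖ = 1)
    (h_eig0 : ∀ φ : X, a u0 φ = lam0 * b u0 φ)
    (h_rayleigh : ∀ u : X, lam0 * b u u ≤ a u u)
    (lam2 : ℝ) (hlam2 : lam0 < lam2)
    (h_gap : ∀ ξ : X, a ξ u0 = 0 → lam2 * b ξ ξ ≤ a ξ ξ)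
    : ∃ s : ℝ, 0 < s ∧ ∃ δ : ℝ, 0 < δ ∧ ∀ ε : ℝ, 0 < ε → ε < s →
      ∀ lam μ : ℝ, ∀ u v : X, u ≠ 0 → v ≠ 0 →
        (∀ φ : X, ε * ⟪u, φ⟫ + a u φ = lam * b u φ) →
        (∀ φ : X, ε * ⟪v, φ⟫ + a v φ = μ * b v φ) →
        |lam - lam0| < δ → |μ - lam0| < δ → lam = μ :=
  perturbed_eigenvalue_unique_near_general a b ha_symm hb_symm hb_posdef lam0 u0 h_eig0 lam2 hlam2
    h_gap
end

section
/- There exist s > 0 and δ > 0 such that for every ε ∈ (0, s) and every λ ∈ ℝ with |λ − λ_0| < δ, the linear subspace {u ∈ X : ε⟨u, φ⟩_X + a(u, φ) = λ b(u, φ) for all φ ∈ X} has dimension at most one. -/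
/-!
An eigenvector `u` of the perturbed problem that is `a`-orthogonal to `u₀` satisfies
`ε‖u‖² = λ b(u,u) - a(u,u) ≤ (λ - λ⁽²⁾) b(u,u) ≤ 0` by the spectral gap, as long as `λ ≤ λ⁽²⁾`;
hence `u = 0`. So `u ↦ a(u, u₀)` is an injective linear functional on the eigenspace, which
therefore has dimension at most one; so any `s > 0` and `δ = λ⁽²⁾ - λ₀` work.
-/

open scoped RealInnerProductSpace

/-- The eigenspace `{u : X | ∀ φ, ε⟪u, φ⟫_X + a(u, φ) = λ b(u, φ)}` of the ε-perturbed
problem, as a linear subspace of `X`. -/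
def eigSpace {X : Type*} [NormedAddCommGroup X] [InnerProductSpace ℝ X]
    (a b : X →ₗ[ℝ] X →ₗ[ℝ] ℝ) (ε lam : ℝ) : Submodule ℝ X where
  carrier := {u : X | ∀ φ : X, ε * ⟪u, φ⟫ + a u φ = lam * b u φ}
  add_mem' := by
    intro u v hu hv φ
    simp only [inner_add_left, map_add, LinearMap.add_apply]
    linear_combination hu φ + hv φ
  zero_mem' := by
    intro φ
    simp
  smul_mem' := by
    intro c u hu φ
    simp only [real_inner_smul_left, map_smul, LinearMap.smul_apply, smul_eq_mul]
    linear_combination c * hu φ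

theorem Submodule.rank_le_one_of_disjoint_ker {K V : Type*} [Field K] [AddCommGroup V]
    [Module K V] (p : Submodule K V) (ℓ : V →ₗ[K] K) (h : Disjoint p (LinearMap.ker ℓ)) :
    Module.rank K p ≤ 1 := by
  have hinj : Function.Injective (ℓ.comp p.subtype) := by
    rwa [← LinearMap.ker_eq_bot, LinearMap.ker_comp, ← Submodule.disjoint_iff_comap_eq_bot]
  simpa using (ℓ.comp p.subtype).lift_rank_le_of_injective hinj

theorem eq_zero_of_mem_eigSpace_of_le_rayleigh {X : Type*} [NormedAddCommGroup X]
    [InnerProductSpace ℝ X] {a b : X →ₗ[ℝ] X →ₗ[ℝ] ℝ} {ε lam lam2 : ℝ} {u : X}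
    (hu : u ∈ eigSpace a b ε lam) (hε : 0 < ε) (hlam : lam ≤ lam2) (hb : 0 ≤ b u u)
    (hgap : lam2 * b u u ≤ a u u) : u = 0 := by
  have hnorm : ε * ⟪u, u⟫ ≤ 0 := by
    calc ε * ⟪u, u⟫ = lam * b u u - a u u := by linarith [hu u]
      _ ≤ (lam - lam2) * b u u := by linarith
      _ ≤ 0 := mul_nonpos_of_nonpos_of_nonneg (by linarith) hb
  have hinner : ⟪u, u⟫ = 0 :=
    le_antisymm (nonpos_of_mul_nonpos_right hnorm hε) real_inner_self_nonneg
  exact inner_self_eq_zero.mp hinner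

theorem perturbed_eigenspace_simple_general
    {X : Type*} [NormedAddCommGroup X] [InnerProductSpace ℝ X]
    (a b : X →ₗ[ℝ] X →ₗ[ℝ] ℝ)
    (hb_posdef : ∀ u : X, u ≠ 0 → 0 < b u u)
    (lam0 : ℝ) (u0 : X)
    (lam2 : ℝ) (hlam2 : lam0 < lam2)
    (h_gap : ∀ ξ : X, a ξ u0 = 0 → lam2 * b ξ ξ ≤ a ξ ξ)
    : ∃ s : ℝ, 0 < s ∧ ∃ δ : ℝ, 0 < δ ∧ ∀ ε : ℝ, 0 < ε → ε < s →
      ∀ lam : ℝ, |lam - lam0| < δ →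
        Module.rank ℝ ↥(eigSpace a b ε lam) ≤ 1 := by
  have hb_nonneg (u : X) : 0 ≤ b u u := by
    rcases eq_or_ne u 0 with rfl | hu
    · simp
    · exact (hb_posdef u hu).le
  refine ⟨1, one_pos, lam2 - lam0, sub_pos.2 hlam2, fun ε hε _ lam hlam => ?_⟩
  have hlam_le : lam ≤ lam2 := by linarith [(abs_lt.1 hlam).2]
  refine (eigSpace a b ε lam).rank_le_one_of_disjoint_ker (a.flip u0) ?_
  refine LinearMap.disjoint_ker.2 fun u hu hau => ?_
  exact eq_zero_of_mem_eigSpace_of_le_rayleigh hu hε hlam_le (hb_nonneg u) (h_gap u hau)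

/-- The simplicity step of Theorem 1.2: for all small `ε > 0` and all `λ` near `λ₀`,
the eigenspace of the ε-perturbed problem has dimension at most one. -/
theorem perturbed_eigenspace_simple
    {X : Type*} [NormedAddCommGroup X] [InnerProductSpace ℝ X] [CompleteSpace X]
    (a b : X →ₗ[ℝ] X →ₗ[ℝ] ℝ)
    (ha_symm : ∀ u v : X, a u v = a v u)
    (hb_symm : ∀ u v : X, b u v = b v u)
    (ha_cont : Continuous fun p : X × X => a p.1 p.2)
    (hb_cont : Continuous fun p : X × X => b p.1 p.2)
    (ha_nonneg : ∀ u : X, 0 ≤ a u u)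
    (hb_posdef : ∀ u : X, u ≠ 0 → 0 < b u u)
    (hb_compact : ∀ (v : ℕ → X) (w : X),
        (∀ φ : X, Filter.Tendsto (fun k => ⟪v k, φ⟫) Filter.atTop (nhds ⟪w, φ⟫)) →
        Filter.Tendsto (fun k => b (v k - w) (v k - w)) Filter.atTop (nhds 0))
    (lam0 : ℝ) (hlam0 : 0 < lam0) (u0 : X) (hu0 : ‖u0‖ = 1)
    (h_eig0 : ∀ φ : X, a u0 φ = lam0 * b u0 φ)
    (h_rayleigh : ∀ u : X, lam0 * b u u ≤ a u u)
    (lam2 : ℝ) (hlam2 : lam0 < lam2)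
    (h_gap : ∀ ξ : X, a ξ u0 = 0 → lam2 * b ξ ξ ≤ a ξ ξ)
    : ∃ s : ℝ, 0 < s ∧ ∃ δ : ℝ, 0 < δ ∧ ∀ ε : ℝ, 0 < ε → ε < s →
      ∀ lam : ℝ, |lam - lam0| < δ →
        Module.rank ℝ ↥(eigSpace a b ε lam) ≤ 1 :=
  perturbed_eigenspace_simple_general a b hb_posdef lam0 u0 lam2 hlam2 h_gap
end

section
/- Let ε > 0 and let (λ_ε, u_ε) be an eigenpair of the ε-perturbed problem. Define α := ⟨u_ε, u_0⟩_X, η := u_ε − α u_0, and β := a(η, u_0) / a(u_0, u_0). Then ε α = (λ_ε − λ_0)(α + β) b(u_0, u_0). -/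
/-!
Test the perturbed eigenvalue equation against `u₀`. By symmetry of `a` and `b`, the principal
eigen-equation can be read from the other side, `a v u₀ = λ₀ b(v, u₀)`, so the `a`-term cancels
against the `λ₀`-part of the right-hand side and leaves `ε α = (λ_ε − λ₀) b(u_ε, u₀)`. Splitting
`u_ε = α u₀ + η` and using the same identity for `η` and for `u₀` gives
`b(u_ε, u₀) = (α + β) b(u₀, u₀)`.
-/

open scoped RealInnerProductSpace

section Pencil

variable {K M : Type*} [Field K] [AddCommGroup M] [Module K M] (a b : M →ₗ[K] M →ₗ[K] K)

theorem apply_eigenvector_right (ha_symm : ∀ u v, a u v = a v u) (hb_symm : ∀ u v, b u v = b v u)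
    {lam0 : K} {u0 : M} (h_eig0 : ∀ φ, a u0 φ = lam0 * b u0 φ) (v : M) :
    a v u0 = lam0 * b v u0 := by
  rw [ha_symm, h_eig0, hb_symm]

theorem apply_smul_add_eigenvector_left (ha_symm : ∀ u v, a u v = a v u)
    (hb_symm : ∀ u v, b u v = b v u) {lam0 : K} (hlam0 : lam0 ≠ 0) {u0 : M}
    (hb0 : b u0 u0 ≠ 0) (h_eig0 : ∀ φ, a u0 φ = lam0 * b u0 φ) (α : K) (η : M) :
    b (α • u0 + η) u0 = (α + a η u0 / a u0 u0) * b u0 u0 := by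
  rw [apply_eigenvector_right a b ha_symm hb_symm h_eig0, h_eig0]
  simp only [map_add, map_smul, LinearMap.add_apply, LinearMap.smul_apply, smul_eq_mul]
  field_simp

end Pencil

theorem mul_inner_eigenvector_eq {X : Type*} [NormedAddCommGroup X] [InnerProductSpace ℝ X]
    (a b : X →ₗ[ℝ] X →ₗ[ℝ] ℝ) (ha_symm : ∀ u v, a u v = a v u) (hb_symm : ∀ u v, b u v = b v u)
    {lam0 : ℝ} {u0 : X} (h_eig0 : ∀ φ, a u0 φ = lam0 * b u0 φ)
    {ε lamε : ℝ} {uε : X} (h_pair : ∀ φ, ε * ⟪uε, φ⟫ + a uε φ = lamε * b uε φ) :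
    ε * ⟪uε, u0⟫ = (lamε - lam0) * b uε u0 := by
  have h := h_pair u0
  rw [apply_eigenvector_right a b ha_symm hb_symm h_eig0] at h
  linear_combination h

theorem perturbed_eigenvalue_identity_general
    {X : Type*} [NormedAddCommGroup X] [InnerProductSpace ℝ X]
    (a b : X →ₗ[ℝ] X →ₗ[ℝ] ℝ)
    (ha_symm : ∀ u v : X, a u v = a v u)
    (hb_symm : ∀ u v : X, b u v = b v u)
    (hb_posdef : ∀ u : X, u ≠ 0 → 0 < b u u)
    (lam0 : ℝ) (hlam0 : 0 < lam0) (u0 : X) (hu0 : ‖u0‖ = 1)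
    (h_eig0 : ∀ φ : X, a u0 φ = lam0 * b u0 φ)
    (ε : ℝ) (lamε : ℝ) (uε : X)
    (h_pair : ∀ φ : X, ε * ⟪uε, φ⟫ + a uε φ = lamε * b uε φ)
    (α : ℝ) (hα : α = ⟪uε, u0⟫)
    (η : X) (hη : η = uε - α • u0)
    (β : ℝ) (hβ : β = a η u0 / a u0 u0) :
    ε * α = (lamε - lam0) * (α + β) * b u0 u0 := by
  have hu0_ne : u0 ≠ 0 := norm_ne_zero_iff.mp (by rw [hu0]; exact one_ne_zero)
  have h_split : uε = α • u0 + η := by rw [hη, add_sub_cancel]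
  calc ε * α = (lamε - lam0) * b uε u0 := by
        rw [hα]; exact mul_inner_eigenvector_eq a b ha_symm hb_symm h_eig0 h_pair
    _ = (lamε - lam0) * ((α + β) * b u0 u0) := by
        rw [h_split, hβ, apply_smul_add_eigenvector_left a b ha_symm hb_symm hlam0.ne'
          (hb_posdef u0 hu0_ne).ne' h_eig0]
    _ = (lamε - lam0) * (α + β) * b u0 u0 := (mul_assoc _ _ _).symm

/-- The identity (2.27)–(2.28): for an eigenpair `(λ_ε, u_ε)` of the ε-perturbed problem,
with `α = ⟪u_ε, u₀⟫_X`, `η = u_ε − α u₀` and `β = a(η, u₀)/a(u₀, u₀)`, one has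
`ε α = (λ_ε − λ₀)(α + β) b(u₀, u₀)`. -/
theorem perturbed_eigenvalue_identity
    {X : Type*} [NormedAddCommGroup X] [InnerProductSpace ℝ X] [CompleteSpace X]
    (a b : X →ₗ[ℝ] X →ₗ[ℝ] ℝ)
    (ha_symm : ∀ u v : X, a u v = a v u)
    (hb_symm : ∀ u v : X, b u v = b v u)
    (ha_cont : Continuous fun p : X × X => a p.1 p.2)
    (hb_cont : Continuous fun p : X × X => b p.1 p.2)
    (ha_nonneg : ∀ u : X, 0 ≤ a u u)
    (hb_posdef : ∀ u : X, u ≠ 0 → 0 < b u u)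
    (hb_compact : ∀ (v : ℕ → X) (w : X),
        (∀ φ : X, Filter.Tendsto (fun k => ⟪v k, φ⟫) Filter.atTop (nhds ⟪w, φ⟫)) →
        Filter.Tendsto (fun k => b (v k - w) (v k - w)) Filter.atTop (nhds 0))
    (lam0 : ℝ) (hlam0 : 0 < lam0) (u0 : X) (hu0 : ‖u0‖ = 1)
    (h_eig0 : ∀ φ : X, a u0 φ = lam0 * b u0 φ)
    (h_rayleigh : ∀ u : X, lam0 * b u u ≤ a u u)
    (lam2 : ℝ) (hlam2 : lam0 < lam2)
    (h_gap : ∀ ξ : X, a ξ u0 = 0 → lam2 * b ξ ξ ≤ a ξ ξ)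
    (ε : ℝ) (hε : 0 < ε) (lamε : ℝ) (uε : X) (huε : uε ≠ 0)
    (h_pair : ∀ φ : X, ε * ⟪uε, φ⟫ + a uε φ = lamε * b uε φ)
    (α : ℝ) (hα : α = ⟪uε, u0⟫)
    (η : X) (hη : η = uε - α • u0)
    (β : ℝ) (hβ : β = a η u0 / a u0 u0) :
    ε * α = (lamε - lam0) * (α + β) * b u0 u0 :=
  perturbed_eigenvalue_identity_general a b ha_symm hb_symm hb_posdef lam0 hlam0 u0 hu0 h_eig0 ε
    lamε uε h_pair α hα η hη β hβ
end

section
/- Let ε > 0 and let (λ_ε, u_ε) be an eigenpair of the ε-perturbed problem with λ_ε ≤ λ⁽²⁾. Define α := ⟨u_ε, u_0⟩_X, γ := a(u_ε, u_0) / a(u_0, u_0), and β := γ − α. If γ > 0, then β ≥ 0, and β = 0 if and only if u_ε = γ u_0. -/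
open scoped RealInnerProductSpace

/-!
Split `u_ε = γ u₀ + ξ` with `ξ` `a`-orthogonal to `u₀`; since `u₀` is an eigenvector, `ξ` is also
`b`-orthogonal to `u₀`. Testing the perturbed equation with `ξ` and using the spectral gap
`a(ξ, ξ) ≥ λ⁽²⁾ b(ξ, ξ) ≥ λ_ε b(ξ, ξ)` leaves `ε ⟪u_ε, ξ⟫ ≤ 0`, and for a unit vector `u₀`
one has `⟪u_ε, ξ⟫ = ‖ξ‖² − γ β`. Hence `‖ξ‖² ≤ γ β`.
-/

namespace LinearMap

variable {X : Type*} [AddCommGroup X] [Module ℝ X] (a b : X →ₗ[ℝ] X →ₗ[ℝ] ℝ)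

theorem apply_sub_smul_div_apply_self_eq_zero {u v : X} (hv : a v v ≠ 0) :
    a (u - (a u v / a v v) • v) v = 0 := by
  simp only [map_sub, map_smul, sub_apply, smul_apply, smul_eq_mul]
  field_simp
  ring

variable {a b}

theorem apply_sub_smul_right_eq_apply_self (ha_symm : ∀ u v : X, a u v = a v u) {u v : X}
    {c : ℝ} (h : a (u - c • v) v = 0) : a u (u - c • v) = a (u - c • v) (u - c • v) := by
  nth_rewrite 1 [← sub_add_cancel u (c • v)]
  rw [map_add, map_smul, add_apply, smul_apply, smul_eq_mul, ha_symm v, h, mul_zero, add_zero]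

theorem apply_eq_zero_of_eigenvector (ha_symm : ∀ u v : X, a u v = a v u)
    (hb_symm : ∀ u v : X, b u v = b v u) {lam : ℝ} (hlam : lam ≠ 0) {v ξ : X}
    (h_eig : ∀ φ : X, a v φ = lam * b v φ) (h : a ξ v = 0) : b ξ v = 0 := by
  have : lam * b ξ v = 0 := by rw [hb_symm, ← h_eig, ← ha_symm, h]
  exact (mul_eq_zero.mp this).resolve_left hlam

end LinearMap

section InnerProductSpace

variable {X : Type*} [NormedAddCommGroup X] [InnerProductSpace ℝ X]

theorem inner_nonpos_of_perturbed_eigen {a b : X →ₗ[ℝ] X →ₗ[ℝ] ℝ} {ε lam μ : ℝ} {u ξ : X}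
    (hε : 0 < ε) (h_pair : ε * ⟪u, ξ⟫ + a u ξ = lam * b u ξ) (ha : a u ξ = a ξ ξ)
    (hb : b u ξ = b ξ ξ) (hlam : lam ≤ μ) (hbξ : 0 ≤ b ξ ξ) (h_gap : μ * b ξ ξ ≤ a ξ ξ) :
    ⟪u, ξ⟫ ≤ 0 := by
  rw [ha, hb] at h_pair
  have : ε * ⟪u, ξ⟫ ≤ 0 := by nlinarith [mul_le_mul_of_nonneg_right hlam hbξ]
  exact nonpos_of_mul_nonpos_right this hε

theorem inner_sub_smul_eq_of_norm_eq_one {u v : X} (hv : ‖v‖ = 1) (c : ℝ) :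
    ⟪u, u - c • v⟫ = ‖u - c • v‖ ^ 2 - c * (c - ⟪u, v⟫) := by
  rw [norm_sub_sq_real, inner_sub_right, real_inner_smul_right, norm_smul, hv,
    real_inner_self_eq_norm_sq, Real.norm_eq_abs, mul_one, sq_abs]
  ring

theorem sub_inner_nonneg_of_inner_sub_smul_nonpos {u v : X} (hv : ‖v‖ = 1) {c : ℝ} (hc : 0 < c)
    (h : ⟪u, u - c • v⟫ ≤ 0) : 0 ≤ c - ⟪u, v⟫ ∧ (c - ⟪u, v⟫ = 0 ↔ u = c • v) := by
  rw [inner_sub_smul_eq_of_norm_eq_one hv] at h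
  have hnorm : ‖u - c • v‖ ^ 2 ≤ c * (c - ⟪u, v⟫) := by linarith
  have hnonneg : 0 ≤ c - ⟪u, v⟫ := nonneg_of_mul_nonneg_right ((sq_nonneg _).trans hnorm) hc
  refine ⟨hnonneg, fun hzero => ?_, fun hu => ?_⟩
  · rw [hzero, mul_zero] at hnorm
    have : ‖u - c • v‖ ^ 2 = 0 := le_antisymm hnorm (sq_nonneg _)
    rwa [sq_eq_zero_iff, norm_eq_zero, sub_eq_zero] at this
  · rw [hu, real_inner_smul_left, real_inner_self_eq_norm_sq, hv]
    ring

end InnerProductSpace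

theorem perturbed_beta_nonneg_general
    {X : Type*} [NormedAddCommGroup X] [InnerProductSpace ℝ X]
    (a b : X →ₗ[ℝ] X →ₗ[ℝ] ℝ)
    (ha_symm : ∀ u v : X, a u v = a v u)
    (hb_symm : ∀ u v : X, b u v = b v u)
    (hb_posdef : ∀ u : X, u ≠ 0 → 0 < b u u)
    (lam0 : ℝ) (u0 : X) (hu0 : ‖u0‖ = 1)
    (h_eig0 : ∀ φ : X, a u0 φ = lam0 * b u0 φ)
    (lam2 : ℝ)
    (h_gap : ∀ ξ : X, a ξ u0 = 0 → lam2 * b ξ ξ ≤ a ξ ξ)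
    (ε : ℝ) (hε : 0 < ε) (lamε : ℝ) (uε : X)
    (h_pair : ∀ φ : X, ε * ⟪uε, φ⟫ + a uε φ = lamε * b uε φ)
    (h_le : lamε ≤ lam2)
    (α : ℝ) (hα : α = ⟪uε, u0⟫)
    (γ : ℝ) (hγ : γ = a uε u0 / a u0 u0)
    (β : ℝ) (hβ : β = γ - α)
    (hγ_pos : 0 < γ) :
    0 ≤ β ∧ (β = 0 ↔ uε = γ • u0) := by
  -- `γ > 0` rules out the junk value `a(u_ε, u₀) / 0 = 0`.
  have ha00 : a u0 u0 ≠ 0 := fun h => hγ_pos.ne' (by rw [hγ, h, div_zero])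
  have hlam0 : lam0 ≠ 0 := left_ne_zero_of_mul (h_eig0 u0 ▸ ha00)
  set ξ := uε - γ • u0 with hξ
  have haξ : a ξ u0 = 0 := by
    rw [hξ, hγ]
    exact a.apply_sub_smul_div_apply_self_eq_zero ha00
  have hbξ : b ξ u0 = 0 := LinearMap.apply_eq_zero_of_eigenvector ha_symm hb_symm hlam0 h_eig0 haξ
  have hbξξ : 0 ≤ b ξ ξ := by
    rcases eq_or_ne ξ 0 with h | h
    · simp [h]
    · exact (hb_posdef ξ h).le
  have h_inner : ⟪uε, ξ⟫ ≤ 0 := inner_nonpos_of_perturbed_eigen hε (h_pair ξ)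
    (LinearMap.apply_sub_smul_right_eq_apply_self ha_symm haξ)
    (LinearMap.apply_sub_smul_right_eq_apply_self hb_symm hbξ) h_le hbξξ (h_gap ξ haξ)
  rw [hβ, hα]
  exact sub_inner_nonneg_of_inner_sub_smul_nonpos hu0 hγ_pos h_inner

/-- The sign claim (2.34): for an eigenpair `(λ_ε, u_ε)` of the ε-perturbed problem with
`λ_ε ≤ λ⁽²⁾`, writing `α = ⟪u_ε, u₀⟫_X`, `γ = a(u_ε, u₀)/a(u₀, u₀)` and `β = γ − α`,
if `γ > 0` then `β ≥ 0`, with `β = 0` exactly in the exceptional case `u_ε = γ u₀`. -/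
theorem perturbed_beta_nonneg
    {X : Type*} [NormedAddCommGroup X] [InnerProductSpace ℝ X] [CompleteSpace X]
    (a b : X →ₗ[ℝ] X →ₗ[ℝ] ℝ)
    (ha_symm : ∀ u v : X, a u v = a v u)
    (hb_symm : ∀ u v : X, b u v = b v u)
    (ha_cont : Continuous fun p : X × X => a p.1 p.2)
    (hb_cont : Continuous fun p : X × X => b p.1 p.2)
    (ha_nonneg : ∀ u : X, 0 ≤ a u u)
    (hb_posdef : ∀ u : X, u ≠ 0 → 0 < b u u)
    (hb_compact : ∀ (v : ℕ → X) (w : X),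
        (∀ φ : X, Filter.Tendsto (fun k => ⟪v k, φ⟫) Filter.atTop (nhds ⟪w, φ⟫)) →
        Filter.Tendsto (fun k => b (v k - w) (v k - w)) Filter.atTop (nhds 0))
    (lam0 : ℝ) (hlam0 : 0 < lam0) (u0 : X) (hu0 : ‖u0‖ = 1)
    (h_eig0 : ∀ φ : X, a u0 φ = lam0 * b u0 φ)
    (h_rayleigh : ∀ u : X, lam0 * b u u ≤ a u u)
    (lam2 : ℝ) (hlam2 : lam0 < lam2)
    (h_gap : ∀ ξ : X, a ξ u0 = 0 → lam2 * b ξ ξ ≤ a ξ ξ)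
    (ε : ℝ) (hε : 0 < ε) (lamε : ℝ) (uε : X) (huε : uε ≠ 0)
    (h_pair : ∀ φ : X, ε * ⟪uε, φ⟫ + a uε φ = lamε * b uε φ)
    (h_le : lamε ≤ lam2)
    (α : ℝ) (hα : α = ⟪uε, u0⟫)
    (γ : ℝ) (hγ : γ = a uε u0 / a u0 u0)
    (β : ℝ) (hβ : β = γ - α)
    (hγ_pos : 0 < γ) :
    0 ≤ β ∧ (β = 0 ↔ uε = γ • u0) :=
  perturbed_beta_nonneg_general a b ha_symm hb_symm hb_posdef lam0 u0 hu0 h_eig0 lam2 h_gap ε hε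
    lamε uε h_pair h_le α hα γ hγ β hβ hγ_pos
end

section
/- There exists s > 0 such that for every ε ∈ (0, s) the following hold: (i) there is an eigenpair (λ_ε, u_ε) of the ε-perturbed problem with ‖u_ε‖_X = 1, a(u_ε, u_0) ≥ 0, and λ_ε = inf{ (ε‖u‖_X² + a(u, u)) / b(u, u) : u ∈ X, u ≠ 0 }; (ii) λ_0 < λ_ε ≤ λ_0 + ε / b(u_0, u_0); (iii) the subspace {u ∈ X : ε⟨u, φ⟩_X + a(u, φ) = λ_ε b(u, φ) for all φ ∈ X} is one-dimensional; (iv) there is no v ∈ X with ε⟨v, φ⟩_X + a(v, φ) − λ_ε b(v, φ) = ⟨u_ε, φ⟩_X for all φ ∈ X; (v) there is δ > 0, independent of ε, such that every eigenpair (μ, v) of the ε-perturbed problem with |μ − λ_0| < δ has μ = λ_ε; and (vi) λ_ε → λ_0 and u_ε → u_0 strongly in X as ε → 0⁺. -/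
/-!
For `ε > 0` the form `ε⟪u, u⟫ + a(u, u)` is coercive, so the direct method (weak compactness of
bounded sequences, compactness of `b`, weak lower semicontinuity) yields a minimizer of the Rayleigh
quotient, and its Euler–Lagrange equation makes it an eigenvector for `λ_ε`. Testing with `u₀`
gives `λ_ε ≤ λ₀ + ε / b(u₀, u₀)`, below `λ⁽²⁾` for small `ε`. Below `λ⁽²⁾` eigenvectors cannot be
independent: some combination of two of them is `b`-orthogonal to `u₀`, where the gap reverses the
Rayleigh inequality; this gives the one-dimensional eigenspace and the local uniqueness of `λ_ε`.
As `ε → 0`, weak limits of `u_ε` minimize the unperturbed quotient, so they are multiples of `u₀`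
by the gap, equal to `u₀` by the normalizations, and the convergence is strong because the norms
converge.
-/

open scoped RealInnerProductSpace
open Filter

open Topology
open LinearMap (BilinForm)

section WeakConvergence

variable {X : Type*} [NormedAddCommGroup X] [InnerProductSpace ℝ X]

def WeakTendsto (v : ℕ → X) (w : X) : Prop :=
  ∀ y, Tendsto (fun k => ⟪v k, y⟫) atTop (𝓝 ⟪w, y⟫)

/-- The sequence lives in the separable Hilbert space `Y = closure (span (range v))`, where
sequential Banach–Alaoglu applies; test vectors outside `Y` are handled by orthogonal projection
onto `Y`. -/
theorem exists_subseq_weak_tendsto [CompleteSpace X] {v : ℕ → X} {M : ℝ}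
    (hv : ∀ k, ‖v k‖ ≤ M) :
    ∃ (w : X) (φ : ℕ → ℕ), StrictMono φ ∧ WeakTendsto (fun k => v (φ k)) w := by
  set Y := (Submodule.span ℝ (Set.range v)).topologicalClosure
  have : TopologicalSpace.SeparableSpace Y := by
    apply TopologicalSpace.IsSeparable.separableSpace
    rw [Submodule.topologicalClosure_coe]
    exact (Set.countable_range v).isSeparable.span.closure
  have hvY : ∀ k, v k ∈ Y := fun k =>
    Submodule.le_topologicalClosure _ (Submodule.subset_span ⟨k, rfl⟩)
  let f : ℕ → WeakDual ℝ Y := fun k => (InnerProductSpace.toDual ℝ Y ⟨v k, hvY k⟩).toWeakDual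
  obtain ⟨g, -, φ, hφ, hg⟩ := WeakDual.isSeqCompact_closedBall ℝ Y 0 M (x := f) fun k => by
    simpa [f] using hv k
  refine ⟨(InnerProductSpace.toDual ℝ Y).symm g.toStrongDual, φ, hφ, fun y => ?_⟩
  have := ((WeakDual.eval_continuous (Y.orthogonalProjectionOnto y)).tendsto g).comp hg
  convert this using 2
  · simp [f]
  · rw [← Submodule.inner_orthogonalProjectionOnto_eq_of_mem_left,
      InnerProductSpace.toDual_symm_apply]
    rfl

variable {v : ℕ → X} {w : X}

theorem WeakTendsto.tendsto_apply [CompleteSpace X] (B : BilinForm ℝ X)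
    (hB : Continuous fun p : X × X => B p.1 p.2)
    (hv : WeakTendsto v w) (y : X) :
    Tendsto (fun k => B (v k) y) atTop (𝓝 (B w y)) := by
  let f : StrongDual ℝ X := ⟨B.flip y, hB.comp (continuous_id.prodMk continuous_const)⟩
  have hf : ∀ x, B x y = ⟪x, (InnerProductSpace.toDual ℝ X).symm f⟫ := fun x => by
    rw [real_inner_comm, InnerProductSpace.toDual_symm_apply]
    rfl
  simpa only [hf] using hv _

theorem WeakTendsto.tendsto_apply_self [CompleteSpace X] {B : BilinForm ℝ X}
    (hB : B.IsSymm) (hB_cont : Continuous fun p : X × X => B p.1 p.2)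
    (hv : WeakTendsto v w)
    (hcompact : Tendsto (fun k => B (v k - w) (v k - w)) atTop (𝓝 0)) :
    Tendsto (fun k => B (v k) (v k)) atTop (𝓝 (B w w)) := by
  have hexpand : ∀ x, B x x = B (x - w) (x - w) + 2 * B x w - B w w := fun x => by
    simp only [map_sub, LinearMap.sub_apply]
    linear_combination hB.eq w x
  have := (hcompact.add ((hv.tendsto_apply B hB_cont w).const_mul 2)).sub_const
    (B w w)
  simp only [← hexpand] at this
  convert this using 2
  ring

theorem WeakTendsto.apply_self_le [CompleteSpace X] {B : BilinForm ℝ X} (hB : B.IsSymm)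
    (hB_nonneg : ∀ x, 0 ≤ B x x) (hB_cont : Continuous fun p : X × X => B p.1 p.2)
    (hv : WeakTendsto v w) {r : ℕ → ℝ} {r₀ : ℝ}
    (hr : Tendsto r atTop (𝓝 r₀)) (hle : ∀ k, B (v k) (v k) ≤ r k) : B w w ≤ r₀ := by
  have hlim := (hr.sub ((hv.tendsto_apply B hB_cont w).const_mul 2)).add_const
    (B w w)
  have : 0 ≤ r₀ - 2 * B w w + B w w := ge_of_tendsto' hlim fun k => by
    have := hB_nonneg (v k - w)
    simp only [map_sub, LinearMap.sub_apply] at this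
    linarith [hle k, hB.eq w (v k)]
  linarith

theorem WeakTendsto.norm_le (hv : WeakTendsto v w)
    {M : ℝ} (hM : ∀ k, ‖v k‖ ≤ M) : ‖w‖ ≤ M := by
  have h : ‖w‖ ^ 2 ≤ M * ‖w‖ := by
    rw [← real_inner_self_eq_norm_sq]
    exact le_of_tendsto' (hv w) fun k =>
      (real_inner_le_norm _ _).trans (mul_le_mul_of_nonneg_right (hM k) (norm_nonneg w))
  nlinarith [norm_nonneg w, (norm_nonneg (v 0)).trans (hM 0)]

theorem WeakTendsto.tendsto_of_norm_le
    (hv : WeakTendsto v w) (hnorm : ∀ k, ‖v k‖ ≤ ‖w‖) :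
    Tendsto v atTop (𝓝 w) := by
  have hlim : Tendsto (fun k => 2 * ‖w‖ ^ 2 - 2 * ⟪v k, w⟫) atTop (𝓝 0) := by
    have := ((hv w).const_mul 2).const_sub (2 * ‖w‖ ^ 2)
    rwa [real_inner_self_eq_norm_sq, sub_self] at this
  have hsq : Tendsto (fun k => ‖v k - w‖ ^ 2) atTop (𝓝 0) := by
    refine squeeze_zero (fun k => sq_nonneg _) (fun k => ?_) hlim
    rw [norm_sub_sq_real]
    nlinarith [hnorm k, norm_nonneg (v k)]
  rw [tendsto_iff_norm_sub_tendsto_zero]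
  simpa using hsq.sqrt

end WeakConvergence

theorem tendsto_nhdsGT_of_subseq {α : Type*} {x : ℝ → α} {f : Filter α} {a : ℝ}
    (h : ∀ ns : ℕ → ℝ, (∀ n, a < ns n) → Tendsto ns atTop (𝓝[>] a) →
      ∃ ms : ℕ → ℕ, Tendsto (fun n => x (ns (ms n))) atTop f) :
    Tendsto x (𝓝[>] a) f := by
  refine tendsto_of_subseq_tendsto fun ns hns => ?_
  obtain ⟨ψ, hψ, hpos⟩ := extraction_of_eventually_atTop (hns.eventually self_mem_nhdsWithin)
  obtain ⟨ms, hms⟩ := h (ns ∘ ψ) hpos (hns.comp hψ.tendsto_atTop)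
  exact ⟨ψ ∘ ms, hms⟩

theorem tendsto_nhdsGT_zero_of_le_of_le_add_div {f : ℝ → ℝ} {l C : ℝ}
    (hlow : ∀ ε, 0 < ε → l ≤ f ε) (hup : ∀ ε, 0 < ε → f ε ≤ l + ε / C) :
    Tendsto f (𝓝[>] 0) (𝓝 l) := by
  refine tendsto_of_tendsto_of_tendsto_of_le_of_le' tendsto_const_nhds ?_
    (eventually_nhdsWithin_of_forall hlow) (eventually_nhdsWithin_of_forall hup)
  exact tendsto_nhdsWithin_of_tendsto_nhds (by
    simpa using ((tendsto_id (x := 𝓝 (0 : ℝ))).div_const C).const_add l)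

theorem exists_mem_norm_eq_one_nonneg {E : Type*} [NormedAddCommGroup E] [NormedSpace ℝ E]
    {S : Submodule ℝ E} {w : E} (hwS : w ∈ S) (hw : w ≠ 0)
    (f : E →ₗ[ℝ] ℝ) : ∃ u ∈ S, ‖u‖ = 1 ∧ 0 ≤ f u := by
  have hunit : ‖(‖w‖⁻¹ : ℝ) • w‖ = 1 := norm_smul_inv_norm hw
  have hscale : f ((‖w‖⁻¹ : ℝ) • w) = ‖w‖⁻¹ * f w := by simp
  rcases le_total 0 (f w) with h | h
  · exact ⟨_, S.smul_mem _ hwS, hunit, by rw [hscale]; positivity⟩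
  · refine ⟨-((‖w‖⁻¹ : ℝ) • w), S.neg_mem (S.smul_mem _ hwS), by rw [norm_neg, hunit], ?_⟩
    rw [map_neg, hscale]
    nlinarith [inv_nonneg.mpr (norm_nonneg w)]

section Rayleigh

variable {M : Type*} [AddCommGroup M] [Module ℝ M] {q b : BilinForm ℝ M}

noncomputable def rayleighInf (q b : BilinForm ℝ M) : ℝ :=
  sInf {r : ℝ | ∃ w : M, w ≠ 0 ∧ r = q w w / b w w}

theorem rayleighInf_le_div (hq : ∀ u, 0 ≤ q u u) (hb : ∀ u, u ≠ 0 → 0 < b u u) {w : M}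
    (hw : w ≠ 0) : rayleighInf q b ≤ q w w / b w w :=
  csInf_le ⟨0, by rintro r ⟨u, hu, rfl⟩; exact div_nonneg (hq u) (hb u hu).le⟩ ⟨w, hw, rfl⟩

theorem rayleighInf_mul_le (hq : ∀ u, 0 ≤ q u u) (hb : ∀ u, u ≠ 0 → 0 < b u u) (w : M) :
    rayleighInf q b * b w w ≤ q w w := by
  rcases eq_or_ne w 0 with rfl | hw
  · simp
  · exact (le_div_iff₀ (hb w hw)).mp (rayleighInf_le_div hq hb hw)

/-- The Euler–Lagrange equation: `q - μ b` is positive semidefinite and vanishes at `w`, so `w`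
lies in its kernel by Cauchy–Schwarz. -/
theorem apply_eq_mul_apply_of_apply_self_eq (hq : q.IsSymm) (hb : b.IsSymm) {μ : ℝ}
    (hle : ∀ u, μ * b u u ≤ q u u) {w : M} (hw : q w w = μ * b w w) (φ : M) :
    q w φ = μ * b w φ := by
  set p := q - μ • b
  have hp_nonneg : ∀ u, 0 ≤ p u u := fun u => by simp [p, hle u]
  have hker : w ∈ LinearMap.ker p := (p.apply_apply_same_eq_zero_iff hp_nonneg
    (LinearMap.BilinForm.isSymm_iff.mp (hq.sub (hb.smul μ)))).mp (by simp [p, hw])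
  have := LinearMap.congr_fun (LinearMap.mem_ker.mp hker) φ
  simp only [p, LinearMap.sub_apply, LinearMap.smul_apply, smul_eq_mul,
    LinearMap.zero_apply] at this
  linarith

end Rayleigh

section Minimizer

variable {X : Type*} [NormedAddCommGroup X] [InnerProductSpace ℝ X]

/-- The direct method: a normalized minimizing sequence has a weakly convergent subsequence;
compactness of `b` passes `b` to the limit, weak lower semicontinuity of `q` bounds `q` at the
limit, and coercivity keeps the limit away from `0`. -/
theorem exists_apply_self_eq_rayleighInf_mul [CompleteSpace X] [Nontrivial X]
    {q b : BilinForm ℝ X} (hq_symm : q.IsSymm) (hb_symm : b.IsSymm)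
    (hq_cont : Continuous fun p : X × X => q p.1 p.2)
    (hb_cont : Continuous fun p : X × X => b p.1 p.2) (hb_pos : ∀ u, u ≠ 0 → 0 < b u u)
    (hb_compact : ∀ (v : ℕ → X) (w : X), WeakTendsto v w →
      Tendsto (fun k => b (v k - w) (v k - w)) atTop (𝓝 0))
    {c : ℝ} (hc : 0 < c) (hq_coercive : ∀ u, c * ‖u‖ ^ 2 ≤ q u u) :
    ∃ w, w ≠ 0 ∧ q w w = rayleighInf q b * b w w := by
  have hq_nonneg : ∀ u, 0 ≤ q u u := fun u => by nlinarith [hq_coercive u, sq_nonneg ‖u‖]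
  obtain ⟨x, hx⟩ := exists_ne (0 : X)
  obtain ⟨r, -, hr_lim, hrS⟩ := exists_seq_tendsto_sInf
    (S := {r : ℝ | ∃ w : X, w ≠ 0 ∧ r = q w w / b w w}) ⟨_, x, hx, rfl⟩
    ⟨0, by rintro r ⟨u, hu, rfl⟩; exact div_nonneg (hq_nonneg u) (hb_pos u hu).le⟩
  choose w hw hrw using hrS
  set v := fun n => (‖w n‖⁻¹ : ℝ) • w n
  have hv_norm : ∀ n, ‖v n‖ = 1 := fun n => norm_smul_inv_norm (hw n)
  have hv_eq : ∀ n, q (v n) (v n) = r n * b (v n) (v n) := fun n => by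
    simp only [v, map_smul, LinearMap.smul_apply, smul_eq_mul, hrw n]
    field_simp [(hb_pos _ (hw n)).ne']
  obtain ⟨w₀, φ, hφ, hweak⟩ := exists_subseq_weak_tendsto fun n => (hv_norm n).le
  have hq_lim : Tendsto (fun k => r (φ k) * b (v (φ k)) (v (φ k))) atTop
      (𝓝 (rayleighInf q b * b w₀ w₀)) :=
    (hr_lim.comp hφ.tendsto_atTop).mul
      (hweak.tendsto_apply_self hb_symm hb_cont (hb_compact _ _ hweak))
  have hw₀ : w₀ ≠ 0 := by
    rintro rfl
    have : c ≤ rayleighInf q b * b 0 0 := ge_of_tendsto' hq_lim fun k => by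
      simpa [← hv_eq, hv_norm] using hq_coercive (v (φ k))
    simp only [map_zero, mul_zero] at this
    linarith
  refine ⟨w₀, hw₀, le_antisymm ?_ (rayleighInf_mul_le hq_nonneg hb_pos w₀)⟩
  exact hweak.apply_self_le hq_symm hq_nonneg hq_cont hq_lim
    fun k => (hv_eq _).le

end Minimizer

section Perturbed

variable {X : Type*} [NormedAddCommGroup X] [InnerProductSpace ℝ X]
  {a b : BilinForm ℝ X} {ε μ ν lam0 lam2 : ℝ} {u0 u w z : X}

noncomputable def perturbedForm (a : BilinForm ℝ X) (ε : ℝ) : BilinForm ℝ X :=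
  ε • innerₗ X + a

@[simp]
theorem perturbedForm_apply (u v : X) : perturbedForm a ε u v = ε * ⟪u, v⟫ + a u v :=
  rfl

theorem sInf_eq_rayleighInf_perturbedForm :
    sInf {r : ℝ | ∃ w : X, w ≠ 0 ∧ r = (ε * ‖w‖ ^ 2 + a w w) / b w w} =
      rayleighInf (perturbedForm a ε) b := by
  simp [rayleighInf]

theorem apply_self_of_mem_eigSpace (hu : u ∈ eigSpace a b ε μ) :
    ε * ‖u‖ ^ 2 + a u u = μ * b u u := by
  rw [← real_inner_self_eq_norm_sq]
  exact hu u

theorem apply_self_le_mul_of_mem_eigSpace (hε : 0 ≤ ε) (hu : u ∈ eigSpace a b ε μ) :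
    a u u ≤ μ * b u u := by
  nlinarith [apply_self_of_mem_eigSpace hu, sq_nonneg ‖u‖]

theorem exists_norm_eq_one_mem_eigSpace [CompleteSpace X] [Nontrivial X] (ha : a.IsSymm)
    (hb : b.IsSymm) (ha_cont : Continuous fun p : X × X => a p.1 p.2)
    (hb_cont : Continuous fun p : X × X => b p.1 p.2) (ha_nonneg : ∀ u, 0 ≤ a u u)
    (hb_pos : ∀ u, u ≠ 0 → 0 < b u u)
    (hb_compact : ∀ (v : ℕ → X) (w : X), WeakTendsto v w →
      Tendsto (fun k => b (v k - w) (v k - w)) atTop (𝓝 0))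
    (f : X →ₗ[ℝ] ℝ) (hε : 0 < ε) :
    ∃ u, ‖u‖ = 1 ∧ 0 ≤ f u ∧ u ∈ eigSpace a b ε (rayleighInf (perturbedForm a ε) b) := by
  have hq : (perturbedForm a ε).IsSymm :=
    ⟨fun u v => by rw [perturbedForm_apply, perturbedForm_apply, real_inner_comm, ha.eq]⟩
  have hq_cont : Continuous fun p : X × X => perturbedForm a ε p.1 p.2 := by
    simp only [perturbedForm_apply]
    exact (continuous_const.mul (continuous_fst.inner continuous_snd)).add ha_cont
  have hq_coercive : ∀ u, ε * ‖u‖ ^ 2 ≤ perturbedForm a ε u u := fun u => by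
    simp [ha_nonneg u]
  obtain ⟨w, hw, hmin⟩ := exists_apply_self_eq_rayleighInf_mul hq hb hq_cont hb_cont hb_pos
    hb_compact hε hq_coercive
  have hq_nonneg : ∀ u, 0 ≤ perturbedForm a ε u u := fun u =>
    (by positivity : 0 ≤ ε * ‖u‖ ^ 2).trans (hq_coercive u)
  have hwE : w ∈ eigSpace a b ε (rayleighInf (perturbedForm a ε) b) := fun φ => by
    simpa using apply_eq_mul_apply_of_apply_self_eq hq hb
      (rayleighInf_mul_le hq_nonneg hb_pos) hmin φ
  obtain ⟨u, huE, hu1, hfu⟩ := exists_mem_norm_eq_one_nonneg hwE hw f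
  exact ⟨u, hu1, hfu, huE⟩

theorem rayleighInf_perturbedForm_le (ha_nonneg : ∀ u, 0 ≤ a u u)
    (hb_pos : ∀ u, u ≠ 0 → 0 < b u u) (hu0 : ‖u0‖ = 1) (h_eig0 : ∀ φ, a u0 φ = lam0 * b u0 φ)
    (hε : 0 ≤ ε) : rayleighInf (perturbedForm a ε) b ≤ lam0 + ε / b u0 u0 := by
  have hu0ne : u0 ≠ 0 := norm_ne_zero_iff.mp (by simp [hu0])
  have hq_nonneg : ∀ u, 0 ≤ perturbedForm a ε u u := fun u => by
    simpa [real_inner_self_eq_norm_sq] using add_nonneg (by positivity) (ha_nonneg u)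
  convert rayleighInf_le_div hq_nonneg hb_pos hu0ne using 1
  simp only [perturbedForm_apply, real_inner_self_eq_norm_sq, hu0, h_eig0]
  field_simp [(hb_pos u0 hu0ne).ne']
  ring

theorem lt_of_mem_eigSpace (h_rayleigh : ∀ u, lam0 * b u u ≤ a u u)
    (hb_pos : ∀ u, u ≠ 0 → 0 < b u u) (hε : 0 < ε) (hu : u ≠ 0)
    (huE : u ∈ eigSpace a b ε μ) : lam0 < μ := by
  have h := apply_self_of_mem_eigSpace huE
  have : 0 < ε * ‖u‖ ^ 2 := by have := norm_pos_iff.mpr hu; positivity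
  exact lt_of_mul_lt_mul_right (by linarith [h_rayleigh u]) (hb_pos u hu).le

theorem apply_self_le_apply_self_of_mem_eigSpace (h_rayleigh : ∀ u, lam0 * b u u ≤ a u u)
    (hb_pos : ∀ u, u ≠ 0 → 0 < b u u) (hb00 : 0 < b u0 u0) (hε : 0 < ε) (hu : ‖u‖ = 1)
    (huE : u ∈ eigSpace a b ε μ) (hμ : μ ≤ lam0 + ε / b u0 u0) : b u0 u0 ≤ b u u := by
  have h := apply_self_of_mem_eigSpace huE
  rw [hu] at h
  have hbu : 0 ≤ b u u := (hb_pos u (norm_ne_zero_iff.mp (by simp [hu]))).le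
  have : ε ≤ ε / b u0 u0 * b u u := by nlinarith [h_rayleigh u, mul_le_mul_of_nonneg_right hμ hbu]
  rw [div_mul_eq_mul_div, le_div_iff₀ hb00] at this
  nlinarith

/-- `b`-orthogonality to `u₀` implies `a`-orthogonality, so the gap applies. -/
theorem mul_apply_self_lt_of_apply_eq_zero (ha : a.IsSymm) (hb : b.IsSymm)
    (hb_pos : ∀ u, u ≠ 0 → 0 < b u u) (h_eig0 : ∀ φ, a u0 φ = lam0 * b u0 φ)
    (h_gap : ∀ ξ, a ξ u0 = 0 → lam2 * b ξ ξ ≤ a ξ ξ) {m : ℝ} (hm : m < lam2) (hε : 0 ≤ ε)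
    {ξ : X} (hξ : ξ ≠ 0) (hξu0 : b ξ u0 = 0) : m * b ξ ξ < ε * ‖ξ‖ ^ 2 + a ξ ξ := by
  have hgap := h_gap ξ (by rw [ha.eq, h_eig0, hb.eq, hξu0, mul_zero])
  have hbξ := hb_pos ξ hξ
  nlinarith [mul_nonneg hε (sq_nonneg ‖ξ‖)]

theorem apply_self_add_le_max_mul (ha : a.IsSymm) (hb : b.IsSymm) (hb_nonneg : ∀ u, 0 ≤ b u u)
    (hw : w ∈ eigSpace a b ε μ) (hz : z ∈ eigSpace a b ε ν) (α β : ℝ) :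
    ε * ‖α • w + β • z‖ ^ 2 + a (α • w + β • z) (α • w + β • z) ≤
      max μ ν * b (α • w + β • z) (α • w + β • z) := by
  set ξ := α • w + β • z
  have hwz : (μ - ν) * b w z = 0 := by
    have h := hz w
    rw [real_inner_comm, ha.eq, hb.eq] at h
    linarith [hw z]
  have hq : ε * ‖ξ‖ ^ 2 + a ξ ξ = α * (μ * b w ξ) + β * (ν * b z ξ) := by
    rw [← hw ξ, ← hz ξ, ← real_inner_self_eq_norm_sq]
    simp only [ξ, inner_add_left, real_inner_smul_left, map_add, map_smul, LinearMap.add_apply,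
      LinearMap.smul_apply, smul_eq_mul]
    ring
  have hbw : b w ξ = α * b w w + β * b w z := by simp [ξ]
  have hbz : b z ξ = α * b w z + β * b z z := by simp [ξ, hb.eq z w]
  have hbξ : b ξ ξ = α * b w ξ + β * b z ξ := by simp [ξ]
  rw [hq, hbξ, hbw, hbz]
  have := hb_nonneg w
  have := hb_nonneg z
  rcases mul_eq_zero.mp hwz with h | h
  · obtain rfl : μ = ν := by linarith
    rw [max_self]
    linarith
  · rw [h]
    nlinarith [le_max_left μ ν, le_max_right μ ν, mul_nonneg (sq_nonneg α) (hb_nonneg w),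
      mul_nonneg (sq_nonneg β) (hb_nonneg z)]

/-- A suitable combination of `w` and `z` is `b`-orthogonal to `u₀`, which the gap forbids unless
it vanishes. -/
theorem mem_span_singleton_of_mem_eigSpace (ha : a.IsSymm) (hb : b.IsSymm)
    (hb_pos : ∀ u, u ≠ 0 → 0 < b u u) (h_eig0 : ∀ φ, a u0 φ = lam0 * b u0 φ)
    (h_gap : ∀ ξ, a ξ u0 = 0 → lam2 * b ξ ξ ≤ a ξ ξ) (hε : 0 ≤ ε) (hμ : μ < lam2)
    (hν : ν < lam2) (hw : w ∈ eigSpace a b ε μ) (hz : z ∈ eigSpace a b ε ν) (hz0 : z ≠ 0) :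
    w ∈ ℝ ∙ z := by
  have hb_nonneg : ∀ u, 0 ≤ b u u := fun u => by
    rcases eq_or_ne u 0 with rfl | hu
    · simp
    · exact (hb_pos u hu).le
  have hzu0 : b z u0 ≠ 0 := fun h => by
    have := mul_apply_self_lt_of_apply_eq_zero ha hb hb_pos h_eig0 h_gap hν hε hz0 h
    rw [apply_self_of_mem_eigSpace hz] at this
    exact lt_irrefl _ this
  set ξ := b z u0 • w + (-b w u0) • z
  by_cases hξ : ξ = 0
  · refine Submodule.mem_span_singleton.mpr ⟨b w u0 / b z u0, ?_⟩
    rw [add_eq_zero_iff_eq_neg, neg_smul, neg_neg] at hξ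
    rw [div_eq_inv_mul, mul_smul, ← hξ, smul_smul, inv_mul_cancel₀ hzu0, one_smul]
  · have hξu0 : b ξ u0 = 0 := by
      simp only [ξ, map_add, map_smul, LinearMap.add_apply, LinearMap.smul_apply, smul_eq_mul]
      ring
    exact absurd (apply_self_add_le_max_mul ha hb hb_nonneg hw hz _ _) <| not_le.mpr <|
      mul_apply_self_lt_of_apply_eq_zero ha hb hb_pos h_eig0 h_gap (max_lt hμ hν) hε hξ hξu0

theorem rank_eigSpace_eq_one (ha : a.IsSymm) (hb : b.IsSymm)
    (hb_pos : ∀ u, u ≠ 0 → 0 < b u u) (h_eig0 : ∀ φ, a u0 φ = lam0 * b u0 φ)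
    (h_gap : ∀ ξ, a ξ u0 = 0 → lam2 * b ξ ξ ≤ a ξ ξ) (hε : 0 ≤ ε) (hμ : μ < lam2)
    (huE : u ∈ eigSpace a b ε μ) (hu : u ≠ 0) : Module.rank ℝ (eigSpace a b ε μ) = 1 :=
  (rank_submodule_eq_one_iff _).mpr ⟨u, huE, hu, fun _ hw =>
    mem_span_singleton_of_mem_eigSpace ha hb hb_pos h_eig0 h_gap hε hμ hμ hw huE hu⟩

theorem eq_of_mem_eigSpace_of_lt (ha : a.IsSymm) (hb : b.IsSymm)
    (hb_pos : ∀ u, u ≠ 0 → 0 < b u u) (h_eig0 : ∀ φ, a u0 φ = lam0 * b u0 φ)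
    (h_gap : ∀ ξ, a ξ u0 = 0 → lam2 * b ξ ξ ≤ a ξ ξ) (hε : 0 ≤ ε) (hμ : μ < lam2)
    (hν : ν < lam2) (hwE : w ∈ eigSpace a b ε μ) (hw : w ≠ 0) (huE : u ∈ eigSpace a b ε ν)
    (hu : u ≠ 0) : μ = ν := by
  obtain ⟨t, rfl⟩ := Submodule.mem_span_singleton.mp <|
    mem_span_singleton_of_mem_eigSpace ha hb hb_pos h_eig0 h_gap hε hμ hν hwE huE hu
  have ht : t ≠ 0 := by rintro rfl; simp at hw
  have huμ : u ∈ eigSpace a b ε μ := by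
    simpa [smul_smul, ht] using (eigSpace a b ε μ).smul_mem t⁻¹ hwE
  exact mul_right_cancel₀ (hb_pos u hu).ne' ((huμ u).symm.trans (huE u))

/-- Algebraic simplicity: pairing `(A - μ) v = u` with `u` and using symmetry gives `‖u‖² = 0`. -/
theorem not_exists_jordan_chain_of_mem_eigSpace (ha : a.IsSymm) (hb : b.IsSymm)
    (huE : u ∈ eigSpace a b ε μ) (hu : u ≠ 0) :
    ¬ ∃ v : X, ∀ φ : X, ε * ⟪v, φ⟫ + a v φ - μ * b v φ = ⟪u, φ⟫ := by
  rintro ⟨v, hv⟩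
  have h := huE v
  rw [real_inner_comm, ha.eq, hb.eq] at h
  have : ⟪u, u⟫ = 0 := by linarith [hv u]
  exact hu (inner_self_eq_zero.mp this)

end Perturbed

section Convergence

variable {X : Type*} [NormedAddCommGroup X] [InnerProductSpace ℝ X] [CompleteSpace X]
  {a b : BilinForm ℝ X} {lam0 lam2 : ℝ} {u0 : X}

/-- A weak limit `w` of unit vectors with vanishing Rayleigh defect `a - λ₀ b` is a principal
eigenvector, hence `w = c u₀` by the gap. The bounds on `b` force `c = 1`, so `‖w‖ = ‖v k‖` and the
convergence is strong. -/
theorem exists_subseq_tendsto_of_rayleigh_defect (ha : a.IsSymm) (hb : b.IsSymm)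
    (ha_cont : Continuous fun p : X × X => a p.1 p.2)
    (hb_cont : Continuous fun p : X × X => b p.1 p.2) (hb_pos : ∀ u, u ≠ 0 → 0 < b u u)
    (hb_compact : ∀ (v : ℕ → X) (w : X), WeakTendsto v w →
      Tendsto (fun k => b (v k - w) (v k - w)) atTop (𝓝 0))
    (hu0 : ‖u0‖ = 1) (h_eig0 : ∀ φ, a u0 φ = lam0 * b u0 φ)
    (h_rayleigh : ∀ u, lam0 * b u u ≤ a u u) (hlam2 : lam0 < lam2)
    (h_gap : ∀ ξ, a ξ u0 = 0 → lam2 * b ξ ξ ≤ a ξ ξ) {v : ℕ → X} {μ : ℕ → ℝ}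
    (hv : ∀ k, ‖v k‖ = 1) (hv_sign : ∀ k, 0 ≤ b (v k) u0)
    (hv_b : ∀ k, b u0 u0 ≤ b (v k) (v k)) (hv_a : ∀ k, a (v k) (v k) ≤ μ k * b (v k) (v k))
    (hμ : Tendsto μ atTop (𝓝 lam0)) :
    ∃ ms : ℕ → ℕ, Tendsto (fun n => v (ms n)) atTop (𝓝 u0) := by
  have hu0ne : u0 ≠ 0 := norm_ne_zero_iff.mp (by simp [hu0])
  have hb00 := hb_pos u0 hu0ne
  obtain ⟨w, φ, hφ, hweak⟩ := exists_subseq_weak_tendsto fun k => (hv k).le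
  have hb_lim := hweak.tendsto_apply_self hb hb_cont (hb_compact _ _ hweak)
  have hdefect : a w w ≤ lam0 * b w w := by
    have hp_cont : Continuous fun p : X × X => (a - lam0 • b) p.1 p.2 := by
      simp only [LinearMap.sub_apply, LinearMap.smul_apply, smul_eq_mul]
      exact ha_cont.sub (continuous_const.mul hb_cont)
    have := hweak.apply_self_le (ha.sub (hb.smul lam0))
      (fun u => by simp [h_rayleigh u]) hp_cont
      (((hμ.comp hφ.tendsto_atTop).sub_const lam0).mul hb_lim)
      (fun k => by simp only [LinearMap.sub_apply, LinearMap.smul_apply, smul_eq_mul,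
        Function.comp_apply]; linarith [hv_a (φ k)])
    simp only [LinearMap.sub_apply, LinearMap.smul_apply, smul_eq_mul, sub_self,
      zero_mul] at this
    linarith
  have hwE : w ∈ eigSpace a b 0 lam0 := fun φ => by
    simpa using apply_eq_mul_apply_of_apply_self_eq ha hb h_rayleigh
      (le_antisymm hdefect (h_rayleigh w)) φ
  obtain ⟨c, rfl⟩ := Submodule.mem_span_singleton.mp <|
    mem_span_singleton_of_mem_eigSpace ha hb hb_pos h_eig0 h_gap le_rfl hlam2 hlam2 hwE
      (fun φ => by simpa using h_eig0 φ) hu0ne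
  have hc_nonneg : 0 ≤ c := by
    have := ge_of_tendsto' (hweak.tendsto_apply b hb_cont u0)
      fun k => hv_sign (φ k)
    simp only [map_smul, LinearMap.smul_apply, smul_eq_mul] at this
    exact nonneg_of_mul_nonneg_left this hb00
  have hc_sq : 1 ≤ c ^ 2 := by
    have := ge_of_tendsto' hb_lim fun k => hv_b (φ k)
    simp only [map_smul, LinearMap.smul_apply, smul_eq_mul] at this
    nlinarith
  have hc_le : c ≤ 1 := by
    have := hweak.norm_le fun k => (hv (φ k)).le
    rwa [norm_smul, hu0, mul_one, Real.norm_of_nonneg hc_nonneg] at this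
  obtain rfl : c = 1 := by nlinarith
  rw [one_smul] at hweak
  exact ⟨φ, hweak.tendsto_of_norm_le fun k => by rw [hv, hu0]⟩

theorem tendsto_nhdsGT_of_mem_eigSpace (ha : a.IsSymm) (hb : b.IsSymm)
    (ha_cont : Continuous fun p : X × X => a p.1 p.2)
    (hb_cont : Continuous fun p : X × X => b p.1 p.2) (hb_pos : ∀ u, u ≠ 0 → 0 < b u u)
    (hb_compact : ∀ (v : ℕ → X) (w : X), WeakTendsto v w →
      Tendsto (fun k => b (v k - w) (v k - w)) atTop (𝓝 0))
    (hlam0 : 0 < lam0) (hu0 : ‖u0‖ = 1) (h_eig0 : ∀ φ, a u0 φ = lam0 * b u0 φ)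
    (h_rayleigh : ∀ u, lam0 * b u u ≤ a u u) (hlam2 : lam0 < lam2)
    (h_gap : ∀ ξ, a ξ u0 = 0 → lam2 * b ξ ξ ≤ a ξ ξ) {lam : ℝ → ℝ} {u : ℝ → X}
    (hu : ∀ ε, 0 < ε → ‖u ε‖ = 1) (hu_sign : ∀ ε, 0 < ε → 0 ≤ a (u ε) u0)
    (hu_eig : ∀ ε, 0 < ε → u ε ∈ eigSpace a b ε (lam ε))
    (hlam_le : ∀ ε, 0 < ε → lam ε ≤ lam0 + ε / b u0 u0)
    (hlam : Tendsto lam (𝓝[>] 0) (𝓝 lam0)) : Tendsto u (𝓝[>] 0) (𝓝 u0) := by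
  have hb00 := hb_pos u0 (norm_ne_zero_iff.mp (by simp [hu0]))
  have hu_sign' : ∀ ε, 0 < ε → 0 ≤ b (u ε) u0 := fun ε hε => by
    have := hu_sign ε hε
    rw [ha.eq, h_eig0, hb.eq] at this
    exact nonneg_of_mul_nonneg_right this hlam0
  refine tendsto_nhdsGT_of_subseq fun ns hns_pos hns => ?_
  exact exists_subseq_tendsto_of_rayleigh_defect ha hb ha_cont hb_cont hb_pos hb_compact hu0
    h_eig0 h_rayleigh hlam2 h_gap (fun k => hu _ (hns_pos k)) (fun k => hu_sign' _ (hns_pos k))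
    (fun k => apply_self_le_apply_self_of_mem_eigSpace h_rayleigh hb_pos hb00 (hns_pos k)
      (hu _ (hns_pos k)) (hu_eig _ (hns_pos k)) (hlam_le _ (hns_pos k)))
    (fun k => apply_self_le_mul_of_mem_eigSpace (hns_pos k).le (hu_eig _ (hns_pos k)))
    (hlam.comp hns)

end Convergence

/-- Abstract form of Theorem 1.2: for all small `ε > 0` the ε-perturbed problem admits a
normalized, sign-normalized principal eigenpair `(λ_ε, u_ε)` given by the Rayleigh infimum;
`λ₀ < λ_ε ≤ λ₀ + ε / b(u₀, u₀)`; the eigenspace of `λ_ε` is one-dimensional; `u_ε` is not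
in the range of the perturbed operator (algebraic simplicity); `λ_ε` is the unique perturbed
eigenvalue in a fixed neighborhood of `λ₀`; and `(λ_ε, u_ε) → (λ₀, u₀)` as `ε → 0⁺`. -/
theorem perturbed_principal_eigenpair
    {X : Type*} [NormedAddCommGroup X] [InnerProductSpace ℝ X] [CompleteSpace X]
    (a b : X →ₗ[ℝ] X →ₗ[ℝ] ℝ)
    (ha_symm : ∀ u v : X, a u v = a v u)
    (hb_symm : ∀ u v : X, b u v = b v u)
    (ha_cont : Continuous fun p : X × X => a p.1 p.2)
    (hb_cont : Continuous fun p : X × X => b p.1 p.2)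
    (ha_nonneg : ∀ u : X, 0 ≤ a u u)
    (hb_posdef : ∀ u : X, u ≠ 0 → 0 < b u u)
    (hb_compact : ∀ (v : ℕ → X) (w : X),
        (∀ φ : X, Filter.Tendsto (fun k => ⟪v k, φ⟫) Filter.atTop (nhds ⟪w, φ⟫)) →
        Filter.Tendsto (fun k => b (v k - w) (v k - w)) Filter.atTop (nhds 0))
    (lam0 : ℝ) (hlam0 : 0 < lam0) (u0 : X) (hu0 : ‖u0‖ = 1)
    (h_eig0 : ∀ φ : X, a u0 φ = lam0 * b u0 φ)
    (h_rayleigh : ∀ u : X, lam0 * b u u ≤ a u u)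
    (lam2 : ℝ) (hlam2 : lam0 < lam2)
    (h_gap : ∀ ξ : X, a ξ u0 = 0 → lam2 * b ξ ξ ≤ a ξ ξ)
    : ∃ s : ℝ, 0 < s ∧ ∃ δ : ℝ, 0 < δ ∧ ∃ (lam : ℝ → ℝ) (u : ℝ → X),
      (∀ ε : ℝ, 0 < ε → ε < s →
        (u ε ≠ 0 ∧ ‖u ε‖ = 1 ∧ 0 ≤ a (u ε) u0 ∧
          (∀ φ : X, ε * ⟪u ε, φ⟫ + a (u ε) φ = lam ε * b (u ε) φ) ∧
          lam ε = sInf {r : ℝ | ∃ w : X, w ≠ 0 ∧ r = (ε * ‖w‖ ^ 2 + a w w) / b w w}) ∧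
        (lam0 < lam ε ∧ lam ε ≤ lam0 + ε / b u0 u0) ∧
        Module.rank ℝ ↥(eigSpace a b ε (lam ε)) = 1 ∧
        (¬ ∃ v : X, ∀ φ : X, ε * ⟪v, φ⟫ + a v φ - lam ε * b v φ = ⟪u ε, φ⟫) ∧
        (∀ μ : ℝ, ∀ w : X, w ≠ 0 →
          (∀ φ : X, ε * ⟪w, φ⟫ + a w φ = μ * b w φ) → |μ - lam0| < δ → μ = lam ε)) ∧
      Tendsto lam (nhdsWithin 0 (Set.Ioi 0)) (nhds lam0) ∧
      Tendsto u (nhdsWithin 0 (Set.Ioi 0)) (nhds u0) := by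
  have ha : BilinForm.IsSymm a := ⟨ha_symm⟩
  have hb : BilinForm.IsSymm b := ⟨hb_symm⟩
  have hu0ne : u0 ≠ 0 := norm_ne_zero_iff.mp (by simp [hu0])
  have : Nontrivial X := ⟨⟨u0, 0, hu0ne⟩⟩
  have hb00 := hb_posdef u0 hu0ne
  set lam : ℝ → ℝ := fun ε => rayleighInf (perturbedForm a ε) b
  choose! u hu1 hu_sign hu_eig using fun ε (hε : 0 < ε) => exists_norm_eq_one_mem_eigSpace ha hb
    ha_cont hb_cont ha_nonneg hb_posdef hb_compact (a.flip u0) hε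
  have hu_ne : ∀ ε, 0 < ε → u ε ≠ 0 := fun ε hε => norm_ne_zero_iff.mp (by simp [hu1 ε hε])
  have hlam_gt : ∀ ε, 0 < ε → lam0 < lam ε := fun ε hε =>
    lt_of_mem_eigSpace h_rayleigh hb_posdef hε (hu_ne ε hε) (hu_eig ε hε)
  have hlam_le : ∀ ε, 0 < ε → lam ε ≤ lam0 + ε / b u0 u0 := fun ε hε =>
    rayleighInf_perturbedForm_le ha_nonneg hb_posdef hu0 h_eig0 hε.le
  have hlam_lim := tendsto_nhdsGT_zero_of_le_of_le_add_div (fun ε hε => (hlam_gt ε hε).le) hlam_le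
  refine ⟨(lam2 - lam0) * b u0 u0, by nlinarith, lam2 - lam0, by linarith, lam, u,
    fun ε hε hεs => ?_, hlam_lim, tendsto_nhdsGT_of_mem_eigSpace ha hb ha_cont hb_cont hb_posdef
      hb_compact hlam0 hu0 h_eig0 h_rayleigh hlam2 h_gap hu1 hu_sign hu_eig hlam_le hlam_lim⟩
  have hlam2' : lam ε < lam2 := by
    linarith [hlam_le ε hε, (div_lt_iff₀ hb00).mpr hεs]
  exact ⟨⟨hu_ne ε hε, hu1 ε hε, hu_sign ε hε, hu_eig ε hε, sInf_eq_rayleighInf_perturbedForm.symm⟩,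
    ⟨hlam_gt ε hε, hlam_le ε hε⟩,
    rank_eigSpace_eq_one ha hb hb_posdef h_eig0 h_gap hε.le hlam2' (hu_eig ε hε) (hu_ne ε hε),
    not_exists_jordan_chain_of_mem_eigSpace ha hb (hu_eig ε hε) (hu_ne ε hε),
    fun μ w hw hwE hμ => eq_of_mem_eigSpace_of_lt ha hb hb_posdef h_eig0 h_gap hε.le
      (by linarith [(abs_lt.mp hμ).2]) hlam2' hwE hw (hu_eig ε hε) (hu_ne ε hε)⟩
end
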